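/- arXiv:1905.06682 — 15 statements merged into one kernel-verified Lean document; each statement's English description precedes it below -/
import Mathlib

section
/- Let (uⁿ)_{n≥0} be the iterative linearization sequence. Then for every n ≥ 1 it holds that ‖u* − uⁿ‖_X ≤ (1 + β/ν) ‖uⁿ − uⁿ⁻¹‖_X. -/
set_option autoImplicit false

/-- A posteriori error estimate for the iterative linearization sequence:
`‖u* − uⁿ‖ ≤ (1 + β/ν) ‖uⁿ − uⁿ⁻¹‖` for all `n ≥ 1`. -/
theorem stmt_0
    {X : Type*} [NormedAddCommGroup X] [InnerProductSpace ℝ X] [CompleteSpace X]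
    (F : X → X →L[ℝ] ℝ) (L ν : ℝ) (hL : 0 < L) (hν : 0 < ν)
    (hF1 : ∀ u v w : X, |F u w - F v w| ≤ L * ‖u - v‖ * ‖w‖)
    (hF2 : ∀ u v : X, ν * ‖u - v‖ ^ 2 ≤ F u (u - v) - F v (u - v))
    (ustar : X) (hustar : ∀ v : X, F ustar v = 0)
    (a : X → X →ₗ[ℝ] X →ₗ[ℝ] ℝ) (α β : ℝ) (hα : 0 < α) (hβ : 0 < β)
    (hcoer : ∀ u v : X, α * ‖v‖ ^ 2 ≤ a u v v)
    (hbdd : ∀ u v w : X, a u v w ≤ β * ‖v‖ * ‖w‖)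
    (u : ℕ → X)
    (hiter : ∀ n : ℕ, ∀ w : X, a (u n) (u (n + 1)) w = a (u n) (u n) w - F (u n) w) :
    ∀ n : ℕ, 1 ≤ n → ‖ustar - u n‖ ≤ (1 + β / ν) * ‖u n - u (n - 1)‖ := by
  rintro n hn
  obtain ⟨m, rfl⟩ : ∃ m, n = m + 1 := ⟨n - 1, (Nat.succ_pred_eq_of_pos hn).symm⟩
  simp only [Nat.add_sub_cancel]
  -- F (u m) w = a (u m) (u m - u (m+1)) w
  have hFw : ∀ w : X, F (u m) w = a (u m) (u m - u (m + 1)) w := by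
    intro w
    have := hiter m w
    rw [map_sub]
    simp only [LinearMap.sub_apply]
    linarith
  set d : ℝ := ‖ustar - u m‖ with hd
  set e : ℝ := ‖u (m + 1) - u m‖ with he
  -- strong monotonicity at (ustar, u m)
  have hmono : ν * d ^ 2 ≤ β * e * d := by
    have h2 := hF2 ustar (u m)
    rw [hustar] at h2
    have h3 : F (u m) (ustar - u m) = - a (u m) (u (m + 1) - u m) (ustar - u m) := by
      rw [hFw]
      rw [show u m - u (m + 1) = -(u (m + 1) - u m) by abel]
      simp
    have h4 := hbdd (u m) (u (m + 1) - u m) (ustar - u m)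
    rw [h3] at h2
    simp only [zero_sub, neg_neg] at h2
    calc ν * d ^ 2 ≤ a (u m) (u (m + 1) - u m) (ustar - u m) := h2
      _ ≤ β * e * d := h4
  have hd0 : 0 ≤ d := norm_nonneg _
  have he0 : 0 ≤ e := norm_nonneg _
  have hkey : d ≤ (β / ν) * e := by
    rcases eq_or_lt_of_le hd0 with h | h
    · rw [← h]; positivity
    · rw [div_mul_eq_mul_div, le_div_iff₀ hν]
      nlinarith
  have htri : ‖ustar - u (m + 1)‖ ≤ d + e := by
    calc ‖ustar - u (m + 1)‖ = ‖(ustar - u m) + -(u (m + 1) - u m)‖ := by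
          rw [show (ustar - u m) + -(u (m + 1) - u m) = ustar - u (m + 1) by abel]
      _ ≤ ‖ustar - u m‖ + ‖-(u (m + 1) - u m)‖ := norm_add_le _ _
      _ = d + e := by rw [norm_neg]
  calc ‖ustar - u (m + 1)‖ ≤ d + e := htri
    _ ≤ (β / ν) * e + e := by linarith
    _ = (1 + β / ν) * e := by ring
end

section
/- Let (a_j)_{j≥1} be a sequence of nonnegative real numbers and c > 0 a constant such that c · Σ_{j=k+1}^∞ a_j ≤ a_k for all k ≥ 1 (in particular all the tail series converge). Then a_j ≤ c⁻¹ (1 + c)^{2−j} a₁ for every j ≥ 2. -/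
set_option autoImplicit false

/-! With `T k = ∑_{j > k} a_j`, the hypothesis `c T_{k+1} ≤ a_{k+1} = T_k - T_{k+1}` says that the
tails decay geometrically, `T_{k+1} ≤ (1 + c)⁻¹ T_k`. Hence `a_j ≤ T_{j-1} ≤ (1 + c)^{2-j} T_1`,
and `T_1 ≤ c⁻¹ a_1` is the hypothesis at `k = 1`. -/

noncomputable def tailSum (a : ℕ → ℝ) (k : ℕ) : ℝ := ∑' j : ℕ, a (k + 1 + j)

section tailSum

variable {a : ℕ → ℝ} {k : ℕ}

lemma tailSum_eq_add_tailSum_succ (hsum : Summable fun j : ℕ => a (k + 1 + j)) :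
    tailSum a k = a (k + 1) + tailSum a (k + 1) := by
  rw [tailSum, hsum.tsum_eq_zero_add, tailSum]
  congr 2
  ext j
  congr 1
  omega

lemma le_tailSum (hsum : Summable fun j : ℕ => a (k + 1 + j))
    (hnonneg : ∀ j : ℕ, 0 ≤ a (k + 1 + j)) : a (k + 1) ≤ tailSum a k :=
  hsum.le_tsum 0 fun j _ => hnonneg j

lemma one_add_mul_tailSum_succ_le {c : ℝ} (hsum : Summable fun j : ℕ => a (k + 1 + j))
    (hbound : c * tailSum a (k + 1) ≤ a (k + 1)) :
    (1 + c) * tailSum a (k + 1) ≤ tailSum a k := by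
  rw [tailSum_eq_add_tailSum_succ hsum]
  linarith

lemma tailSum_succ_le_geom {c : ℝ} (hc : 0 ≤ c)
    (hsum : ∀ k : ℕ, 1 ≤ k → Summable fun j : ℕ => a (k + 1 + j))
    (hbound : ∀ k : ℕ, 1 ≤ k → c * tailSum a k ≤ a k) (n : ℕ) :
    tailSum a (n + 1) ≤ (1 + c)⁻¹ ^ n * tailSum a 1 := by
  refine le_geom (u := fun n => tailSum a (n + 1)) (by positivity) n fun k _ => ?_
  rw [le_inv_mul_iff₀ (by positivity)]
  exact one_add_mul_tailSum_succ_le (hsum (k + 1) (by omega)) (hbound (k + 2) (by omega))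

end tailSum

/-- If a nonnegative sequence `(a_j)_{j≥1}` satisfies `c · Σ_{j=k+1}^∞ a_j ≤ a_k` for all
`k ≥ 1` (with all tail series convergent), then `a_j ≤ c⁻¹ (1+c)^{2−j} a_1` for all `j ≥ 2`. -/
theorem stmt_2
    (a : ℕ → ℝ) (c : ℝ) (hc : 0 < c)
    (hnonneg : ∀ j : ℕ, 1 ≤ j → 0 ≤ a j)
    (hsum : ∀ k : ℕ, 1 ≤ k → Summable (fun j : ℕ => a (k + 1 + j)))
    (hbound : ∀ k : ℕ, 1 ≤ k → c * ∑' j : ℕ, a (k + 1 + j) ≤ a k) :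
    ∀ j : ℕ, 2 ≤ j → a j ≤ c⁻¹ * (1 + c) ^ ((2 : ℤ) - (j : ℤ)) * a 1 := by
  intro j hj
  obtain ⟨m, rfl⟩ : ∃ m, j = m + 2 := ⟨j - 2, by omega⟩
  have htail_one : tailSum a 1 ≤ c⁻¹ * a 1 := by
    rw [le_inv_mul_iff₀ hc]
    exact hbound 1 le_rfl
  have hexp : (1 + c) ^ ((2 : ℤ) - ((m + 2 : ℕ) : ℤ)) = (1 + c)⁻¹ ^ m := by
    rw [inv_pow, ← zpow_natCast, ← zpow_neg]
    push_cast
    ring_nf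
  calc a (m + 2) ≤ tailSum a (m + 1) :=
        le_tailSum (hsum (m + 1) (by omega)) fun i => hnonneg _ (by omega)
    _ ≤ (1 + c)⁻¹ ^ m * tailSum a 1 := tailSum_succ_le_geom hc.le hsum hbound m
    _ ≤ (1 + c)⁻¹ ^ m * (c⁻¹ * a 1) := by gcongr
    _ = c⁻¹ * (1 + c) ^ ((2 : ℤ) - ((m + 2 : ℕ) : ℤ)) * a 1 := by rw [hexp]; ring
end

section
/- Suppose (F1)–(F4) hold and the bilinear form a(·;·,·) is uniformly coercive and bounded. Then for every k ≥ 1 the iterative linearization sequence satisfies Σ_{j=k+1}^∞ ‖u^j − u^{j−1}‖_X² ≤ C₄ ‖u^k − u^{k−1}‖_X², where C₄ := L C₃²/(2 C_H) and C₃ := 1 + β/ν. -/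
set_option autoImplicit false

/-!
The potential `H` decreases along the iteration at least by `C_H ‖uⁿ − uⁿ⁻¹‖²` per step, so the
tail sum is bounded by `(H(uᵏ) − inf H) / C_H`. By monotonicity of `F`, `inf H = H(u*)`, and by the
Lipschitz continuity of `F`, `H(uᵏ) − H(u*) ≤ (L/2) ‖uᵏ − u*‖²`. Finally, testing the linearized
equation with `uᵏ⁻¹ − u*` and using strong monotonicity and boundedness of `a` gives
`ν ‖uᵏ⁻¹ − u*‖ ≤ β ‖uᵏ − uᵏ⁻¹‖`, whence `‖uᵏ − u*‖ ≤ C₃ ‖uᵏ − uᵏ⁻¹‖`.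
-/

open Set

section Potential

variable {E : Type*} [NormedAddCommGroup E] [NormedSpace ℝ E]

def IsPotential (H : E → ℝ) (F : E → E →L[ℝ] ℝ) : Prop :=
  ∀ v w : E, ∀ t : ℝ, HasDerivAt (fun s : ℝ => H (v + s • w)) (F (v + t • w) w) t

variable {H : E → ℝ} {F : E → E →L[ℝ] ℝ}

theorem IsPotential.le_of_forall_nonneg (hH : IsPotential H F) (x w : E)
    (hder : ∀ t ∈ Ioo (0 : ℝ) 1, 0 ≤ F (x + t • w) w) : H x ≤ H (x + w) := by
  have hmono : MonotoneOn (fun s : ℝ => H (x + s • w)) (Icc 0 1) := by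
    refine monotoneOn_of_hasDerivWithinAt_nonneg (convex_Icc 0 1)
      (fun t _ => (hH x w t).continuousAt.continuousWithinAt)
      (fun t _ => (hH x w t).hasDerivWithinAt) ?_
    rw [interior_Icc]
    exact hder
  simpa using hmono (left_mem_Icc.2 zero_le_one) (right_mem_Icc.2 zero_le_one) zero_le_one

theorem IsPotential.le_add_of_forall_le (hH : IsPotential H F) (x w : E) {c : ℝ}
    (hder : ∀ t ∈ Ioo (0 : ℝ) 1, F (x + t • w) w ≤ t * c) : H (x + w) ≤ H x + c / 2 := by
  have hmono : MonotoneOn (fun s : ℝ => s ^ 2 * c / 2 - H (x + s • w)) (Icc 0 1) := by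
    have hd : ∀ t : ℝ, HasDerivAt (fun s : ℝ => s ^ 2 * c / 2 - H (x + s • w))
        (t * c - F (x + t • w) w) t := fun t =>
      ((((hasDerivAt_pow 2 t).mul_const c).div_const 2).sub (hH x w t)).congr_deriv (by ring)
    refine monotoneOn_of_hasDerivWithinAt_nonneg (convex_Icc 0 1)
      (fun t _ => (hd t).continuousAt.continuousWithinAt) (fun t _ => (hd t).hasDerivWithinAt) ?_
    rw [interior_Icc]
    exact fun t ht => sub_nonneg.2 (hder t ht)
  have h01 := hmono (left_mem_Icc.2 zero_le_one) (right_mem_Icc.2 zero_le_one) zero_le_one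
  simp only [one_smul, zero_smul, add_zero, one_pow, one_mul] at h01
  linarith

theorem IsPotential.le_of_monotone (hH : IsPotential H F)
    (hmono : ∀ u v : E, 0 ≤ F u (u - v) - F v (u - v)) {x : E} (hx : ∀ v : E, F x v = 0)
    (y : E) : H x ≤ H y := by
  have key := hH.le_of_forall_nonneg x (y - x) fun t ht => by
    have h := hmono (x + t • (y - x)) x
    rw [add_sub_cancel_left, hx, sub_zero, map_smul, smul_eq_mul] at h
    exact nonneg_of_mul_nonneg_right (by linarith) ht.1
  rwa [add_sub_cancel] at key

theorem IsPotential.le_add_sq (hH : IsPotential H F) {L : ℝ} {x : E}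
    (hLip : ∀ u w : E, |F u w - F x w| ≤ L * ‖u - x‖ * ‖w‖) (hx : ∀ v : E, F x v = 0)
    (y : E) : H y ≤ H x + L / 2 * ‖y - x‖ ^ 2 := by
  have key := hH.le_add_of_forall_le x (y - x) (c := L * ‖y - x‖ ^ 2) fun t ht => by
    have h := le_of_abs_le (hLip (x + t • (y - x)) (y - x))
    rw [hx, sub_zero, add_sub_cancel_left, norm_smul, Real.norm_of_nonneg ht.1.le] at h
    linarith
  rw [add_sub_cancel] at key
  linarith

end Potential

theorem norm_sub_le_of_linearization_step {E : Type*} [NormedAddCommGroup E] [NormedSpace ℝ E]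
    {F : E → E →L[ℝ] ℝ} {b : E →ₗ[ℝ] E →ₗ[ℝ] ℝ} {ν β : ℝ} (hβ : 0 ≤ β)
    (hF : ∀ u v : E, ν * ‖u - v‖ ^ 2 ≤ F u (u - v) - F v (u - v))
    (hb : ∀ v w : E, b v w ≤ β * ‖v‖ * ‖w‖) {x x' xstar : E} (hxstar : ∀ v : E, F xstar v = 0)
    (hstep : ∀ w : E, b x' w = b x w - F x w) :
    ν * ‖x - xstar‖ ≤ β * ‖x' - x‖ := by
  have hFx : F x (x - xstar) = b (x - x') (x - xstar) := by
    rw [b.map_sub, LinearMap.sub_apply, hstep]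
    ring
  have hsq : ν * ‖x - xstar‖ ^ 2 ≤ β * ‖x' - x‖ * ‖x - xstar‖ := by
    have h := hF x xstar
    rw [hxstar, sub_zero, hFx] at h
    simpa [norm_sub_rev x x'] using h.trans (hb _ _)
  rcases (norm_nonneg (x - xstar)).eq_or_lt with h0 | hpos
  · rw [← h0, mul_zero]
    positivity
  · exact le_of_mul_le_mul_right (by linarith) hpos

theorem summable_and_tsum_le_of_descent {e h : ℕ → ℝ} {c m : ℝ} (hc : 0 < c)
    (he : ∀ n, 0 ≤ e n) (hdesc : ∀ n, c * e n ≤ h n - h (n + 1)) (hm : ∀ n, m ≤ h n) :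
    Summable e ∧ ∑' n, e n ≤ (h 0 - m) / c := by
  have hpartial : ∀ N, ∑ n ∈ Finset.range N, e n ≤ (h 0 - m) / c := fun N => by
    rw [le_div_iff₀ hc, Finset.sum_mul]
    calc ∑ n ∈ Finset.range N, e n * c
        ≤ ∑ n ∈ Finset.range N, (h n - h (n + 1)) :=
          Finset.sum_le_sum fun n _ => by linarith [hdesc n]
      _ = h 0 - h N := Finset.sum_range_sub' h N
      _ ≤ h 0 - m := by linarith [hm N]
  exact ⟨summable_of_sum_range_le he hpartial, Real.tsum_le_of_sum_range_le he hpartial⟩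

theorem stmt_3_general
    {X : Type*} [NormedAddCommGroup X] [InnerProductSpace ℝ X]
    (F : X → X →L[ℝ] ℝ) (L ν : ℝ) (hL : 0 < L) (hν : 0 < ν)
    (hF1 : ∀ u v w : X, |F u w - F v w| ≤ L * ‖u - v‖ * ‖w‖)
    (hF2 : ∀ u v : X, ν * ‖u - v‖ ^ 2 ≤ F u (u - v) - F v (u - v))
    (ustar : X) (hustar : ∀ v : X, F ustar v = 0)
    (a : X → X →ₗ[ℝ] X →ₗ[ℝ] ℝ) (β : ℝ) (hβ : 0 < β)
    (hbdd : ∀ u v w : X, a u v w ≤ β * ‖v‖ * ‖w‖)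
    (u : ℕ → X)
    (hiter : ∀ n : ℕ, ∀ w : X, a (u n) (u (n + 1)) w = a (u n) (u n) w - F (u n) w)
    (H : X → ℝ)
    (hF3 : ∀ v w : X, ∀ t : ℝ, HasDerivAt (fun s : ℝ => H (v + s • w)) (F (v + t • w) w) t)
    (CH : ℝ) (hCH : 0 < CH)
    (hF4 : ∀ n : ℕ, 1 ≤ n → CH * ‖u n - u (n - 1)‖ ^ 2 ≤ H (u (n - 1)) - H (u n))
    (C₃ C₄ : ℝ) (hC₃ : C₃ = 1 + β / ν) (hC₄ : C₄ = L * C₃ ^ 2 / (2 * CH)) :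
    ∀ k : ℕ, 1 ≤ k →
      Summable (fun j : ℕ => ‖u (k + 1 + j) - u (k + j)‖ ^ 2) ∧
      ∑' j : ℕ, ‖u (k + 1 + j) - u (k + j)‖ ^ 2 ≤ C₄ * ‖u k - u (k - 1)‖ ^ 2 := by
  intro k hk
  set d := ‖u k - u (k - 1)‖
  have hmin : ∀ y, H ustar ≤ H y :=
    IsPotential.le_of_monotone hF3 (fun u v => (by positivity : 0 ≤ ν * _).trans (hF2 u v)) hustar
  have hdesc : ∀ n, CH * ‖u (n + 1) - u n‖ ^ 2 ≤ H (u n) - H (u (n + 1)) := fun n => by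
    simpa using hF4 (n + 1) (by omega)
  have hdist : ‖u k - ustar‖ ≤ C₃ * d := by
    have hstep := norm_sub_le_of_linearization_step hβ.le hF2 (hbdd _) hustar (hiter (k - 1))
    rw [Nat.sub_add_cancel hk] at hstep
    have hprev : ‖u (k - 1) - ustar‖ ≤ β / ν * d := by
      rw [div_mul_eq_mul_div, le_div_iff₀ hν]
      linarith
    calc ‖u k - ustar‖ ≤ d + ‖u (k - 1) - ustar‖ := norm_sub_le_norm_sub_add_norm_sub _ _ _
      _ ≤ C₃ * d := by rw [hC₃]; linarith
  obtain ⟨hsum, htsum⟩ := summable_and_tsum_le_of_descent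
    (e := fun j => ‖u (k + 1 + j) - u (k + j)‖ ^ 2) (h := fun j => H (u (k + j))) hCH
    (fun _ => by positivity) (fun j => by rw [Nat.add_right_comm k 1 j]; exact hdesc (k + j))
    (fun j => hmin _)
  rw [add_zero] at htsum
  refine ⟨hsum, htsum.trans ?_⟩
  have hquad := IsPotential.le_add_sq hF3 (fun u w => hF1 u ustar w) hustar (u k)
  have hsq : ‖u k - ustar‖ ^ 2 ≤ (C₃ * d) ^ 2 := pow_le_pow_left₀ (norm_nonneg _) hdist 2
  calc (H (u k) - H ustar) / CH ≤ L / 2 * (C₃ * d) ^ 2 / CH := by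
        gcongr
        linarith [mul_le_mul_of_nonneg_left hsq (by positivity : 0 ≤ L / 2)]
    _ = C₄ * d ^ 2 := by
        rw [hC₄]
        field_simp

/-- Under (F1)–(F4) and uniform coercivity/boundedness of the bilinear form, the
iterative linearization sequence satisfies
`Σ_{j=k+1}^∞ ‖u^j − u^{j−1}‖² ≤ C₄ ‖u^k − u^{k−1}‖²` for every `k ≥ 1`, where
`C₄ = L C₃² / (2 C_H)` and `C₃ = 1 + β/ν`. -/
theorem stmt_3
    {X : Type*} [NormedAddCommGroup X] [InnerProductSpace ℝ X] [CompleteSpace X]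
    (F : X → X →L[ℝ] ℝ) (L ν : ℝ) (hL : 0 < L) (hν : 0 < ν)
    (hF1 : ∀ u v w : X, |F u w - F v w| ≤ L * ‖u - v‖ * ‖w‖)
    (hF2 : ∀ u v : X, ν * ‖u - v‖ ^ 2 ≤ F u (u - v) - F v (u - v))
    (ustar : X) (hustar : ∀ v : X, F ustar v = 0)
    (a : X → X →ₗ[ℝ] X →ₗ[ℝ] ℝ) (α β : ℝ) (hα : 0 < α) (hβ : 0 < β)
    (hcoer : ∀ u v : X, α * ‖v‖ ^ 2 ≤ a u v v)
    (hbdd : ∀ u v w : X, a u v w ≤ β * ‖v‖ * ‖w‖)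
    (u : ℕ → X)
    (hiter : ∀ n : ℕ, ∀ w : X, a (u n) (u (n + 1)) w = a (u n) (u n) w - F (u n) w)
    (H : X → ℝ)
    (hF3 : ∀ v w : X, ∀ t : ℝ, HasDerivAt (fun s : ℝ => H (v + s • w)) (F (v + t • w) w) t)
    (CH : ℝ) (hCH : 0 < CH)
    (hF4 : ∀ n : ℕ, 1 ≤ n → CH * ‖u n - u (n - 1)‖ ^ 2 ≤ H (u (n - 1)) - H (u n))
    (C₃ C₄ : ℝ) (hC₃ : C₃ = 1 + β / ν) (hC₄ : C₄ = L * C₃ ^ 2 / (2 * CH)) :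
    ∀ k : ℕ, 1 ≤ k →
      Summable (fun j : ℕ => ‖u (k + 1 + j) - u (k + j)‖ ^ 2) ∧
      ∑' j : ℕ, ‖u (k + 1 + j) - u (k + j)‖ ^ 2 ≤ C₄ * ‖u k - u (k - 1)‖ ^ 2 :=
  stmt_3_general F L ν hL hν hF1 hF2 ustar hustar a β hβ hbdd u hiter H hF3 CH hCH hF4 C₃ C₄ hC₃ hC₄
end

section
/- Suppose (F1)–(F4) hold and the bilinear form a(·;·,·) is uniformly coercive and bounded. Then the iterative linearization sequence satisfies the contraction-like property ‖uⁿ − uⁿ⁻¹‖_X² ≤ C₄ (1 + C₄⁻¹)^{2−n} ‖u¹ − u⁰‖_X² for every n ≥ 2, where C₄ := L C₃²/(2 C_H) and C₃ := 1 + β/ν. -/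
set_option autoImplicit false

/-- Contraction-like property: under (F1)–(F4) and uniform coercivity/boundedness,
`‖uⁿ − uⁿ⁻¹‖² ≤ C₄ (1 + C₄⁻¹)^{2−n} ‖u¹ − u⁰‖²` for all `n ≥ 2`. -/
theorem stmt_4
    {X : Type*} [NormedAddCommGroup X] [InnerProductSpace ℝ X] [CompleteSpace X]
    (F : X → X →L[ℝ] ℝ) (L ν : ℝ) (hL : 0 < L) (hν : 0 < ν)
    (hF1 : ∀ u v w : X, |F u w - F v w| ≤ L * ‖u - v‖ * ‖w‖)
    (hF2 : ∀ u v : X, ν * ‖u - v‖ ^ 2 ≤ F u (u - v) - F v (u - v))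
    (ustar : X) (hustar : ∀ v : X, F ustar v = 0)
    (a : X → X →ₗ[ℝ] X →ₗ[ℝ] ℝ) (α β : ℝ) (hα : 0 < α) (hβ : 0 < β)
    (hcoer : ∀ u v : X, α * ‖v‖ ^ 2 ≤ a u v v)
    (hbdd : ∀ u v w : X, a u v w ≤ β * ‖v‖ * ‖w‖)
    (u : ℕ → X)
    (hiter : ∀ n : ℕ, ∀ w : X, a (u n) (u (n + 1)) w = a (u n) (u n) w - F (u n) w)
    (H : X → ℝ)
    (hF3 : ∀ v w : X, ∀ t : ℝ, HasDerivAt (fun s : ℝ => H (v + s • w)) (F (v + t • w) w) t)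
    (CH : ℝ) (hCH : 0 < CH)
    (hF4 : ∀ n : ℕ, 1 ≤ n → CH * ‖u n - u (n - 1)‖ ^ 2 ≤ H (u (n - 1)) - H (u n))
    (C₃ C₄ : ℝ) (hC₃ : C₃ = 1 + β / ν) (hC₄ : C₄ = L * C₃ ^ 2 / (2 * CH)) :
    ∀ n : ℕ, 2 ≤ n →
      ‖u n - u (n - 1)‖ ^ 2 ≤ C₄ * (1 + C₄⁻¹) ^ ((2 : ℤ) - (n : ℤ)) * ‖u 1 - u 0‖ ^ 2 := by
  have hC₃pos : 0 < C₃ := by rw [hC₃]; positivity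
  have hC₄pos : 0 < C₄ := by rw [hC₄]; positivity
  have hC₄inv : 0 < C₄⁻¹ := inv_pos.mpr hC₄pos
  obtain ⟨b, hb⟩ : ∃ b : ℝ, b = 1 + C₄⁻¹ := ⟨_, rfl⟩
  have hb1 : 1 < b := by rw [hb]; linarith
  have hbpos : 0 < b := lt_trans one_pos hb1
  obtain ⟨q, hq⟩ : ∃ q : ℝ, q = b⁻¹ := ⟨_, rfl⟩
  have hqpos : 0 < q := by rw [hq]; exact inv_pos.mpr hbpos
  have hq1 : q ≤ 1 := by rw [hq]; exact inv_le_one_of_one_le₀ hb1.le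
  have hC₄ne : C₄ ≠ 0 := ne_of_gt hC₄pos
  have hqeq : q = C₄ / (1 + C₄) := by
    rw [hq, hb, show (1:ℝ) + C₄⁻¹ = (1 + C₄) / C₄ by field_simp; ring, inv_div]
  -- Lemma B : H ustar ≤ H v for all v
  have hBmin : ∀ v : X, H ustar ≤ H v := by
    intro v
    have hmono : MonotoneOn (fun s : ℝ => H (ustar + s • (v - ustar))) (Set.Icc (0:ℝ) 1) := by
      apply monotoneOn_of_deriv_nonneg (convex_Icc 0 1)
      · exact fun t _ => ((hF3 ustar (v - ustar) t).continuousAt).continuousWithinAt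
      · intro t _
        exact ((hF3 ustar (v - ustar) t).differentiableAt).differentiableWithinAt
      · intro t ht
        rw [interior_Icc, Set.mem_Ioo] at ht
        rw [(hF3 ustar (v - ustar) t).deriv]
        have h2 := hF2 (ustar + t • (v - ustar)) ustar
        have he : (ustar + t • (v - ustar)) - ustar = t • (v - ustar) := by abel
        rw [he] at h2
        rw [hustar (t • (v - ustar))] at h2
        have hs : F (ustar + t • (v - ustar)) (t • (v - ustar))
            = t * F (ustar + t • (v - ustar)) (v - ustar) := by
          rw [map_smul]; rfl
        rw [hs, sub_zero] at h2
        have h3 : 0 ≤ t * F (ustar + t • (v - ustar)) (v - ustar) :=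
          le_trans (by positivity) h2
        exact nonneg_of_mul_nonneg_right h3 ht.1
    have h01 := hmono (Set.mem_Icc.mpr ⟨le_refl 0, zero_le_one⟩)
      (Set.mem_Icc.mpr ⟨zero_le_one, le_refl 1⟩) zero_le_one
    simpa using h01
  -- Lemma A : H v - H ustar ≤ L/2 * ‖v - ustar‖²
  have hAup : ∀ v : X, H v - H ustar ≤ L / 2 * ‖v - ustar‖ ^ 2 := by
    intro v
    obtain ⟨c, hc⟩ : ∃ c : ℝ, c = L * ‖v - ustar‖ ^ 2 / 2 := ⟨_, rfl⟩
    have hder : ∀ t : ℝ, HasDerivAt (fun s : ℝ => H (ustar + s • (v - ustar)) - c * s ^ 2)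
        (F (ustar + t • (v - ustar)) (v - ustar) - c * (2 * t)) t := by
      intro t
      have h1 := hF3 ustar (v - ustar) t
      have h2 : HasDerivAt (fun s : ℝ => c * s ^ 2) (c * (2 * t)) t := by
        simpa using (hasDerivAt_pow 2 t).const_mul c
      exact h1.sub h2
    have hanti : AntitoneOn (fun s : ℝ => H (ustar + s • (v - ustar)) - c * s ^ 2)
        (Set.Icc (0:ℝ) 1) := by
      apply antitoneOn_of_deriv_nonpos (convex_Icc 0 1)
      · exact fun t _ => ((hder t).continuousAt).continuousWithinAt
      · intro t _
        exact ((hder t).differentiableAt).differentiableWithinAt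
      · intro t ht
        rw [interior_Icc, Set.mem_Ioo] at ht
        rw [(hder t).deriv]
        have h1 := hF1 (ustar + t • (v - ustar)) ustar (v - ustar)
        have he : (ustar + t • (v - ustar)) - ustar = t • (v - ustar) := by abel
        rw [he, hustar (v - ustar), sub_zero] at h1
        have hn : ‖t • (v - ustar)‖ = t * ‖v - ustar‖ := by
          rw [norm_smul, Real.norm_eq_abs, abs_of_pos ht.1]
        rw [hn] at h1
        have h2 : F (ustar + t • (v - ustar)) (v - ustar) ≤ L * (t * ‖v - ustar‖) * ‖v - ustar‖ :=
          le_trans (le_abs_self _) h1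
        have he2 : L * (t * ‖v - ustar‖) * ‖v - ustar‖ = c * (2 * t) := by rw [hc]; ring
        linarith [h2, he2]
    have h01 := hanti (Set.mem_Icc.mpr ⟨le_refl 0, zero_le_one⟩)
      (Set.mem_Icc.mpr ⟨zero_le_one, le_refl 1⟩) zero_le_one
    simp only [one_smul, zero_smul, add_zero] at h01
    have hv : ustar + (v - ustar) = v := by abel
    rw [hv] at h01
    have h0 : c * (0:ℝ) ^ 2 = 0 := by ring
    have h1 : c * (1:ℝ) ^ 2 = c := by ring
    rw [h0, h1, sub_zero] at h01
    rw [hc] at h01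
    linarith
  -- Lemma C : a posteriori bound
  have hCpost : ∀ n : ℕ, ‖u n - ustar‖ ≤ C₃ * ‖u (n + 1) - u n‖ := by
    intro n
    have h2 := hF2 (u n) ustar
    rw [hustar (u n - ustar), sub_zero] at h2
    have hsub : a (u n) (u n - u (n + 1)) (u n - ustar)
        = a (u n) (u n) (u n - ustar) - a (u n) (u (n + 1)) (u n - ustar) := by
      simp only [map_sub, LinearMap.sub_apply]
      ring
    have hFd : F (u n) (u n - ustar) = a (u n) (u n - u (n + 1)) (u n - ustar) := by
      rw [hsub]
      linarith [hiter n (u n - ustar)]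
    have h3 : F (u n) (u n - ustar) ≤ β * ‖u (n + 1) - u n‖ * ‖u n - ustar‖ := by
      rw [hFd]
      calc a (u n) (u n - u (n + 1)) (u n - ustar)
          ≤ β * ‖u n - u (n + 1)‖ * ‖u n - ustar‖ := hbdd _ _ _
        _ = β * ‖u (n + 1) - u n‖ * ‖u n - ustar‖ := by rw [norm_sub_rev]
    rcases eq_or_lt_of_le (norm_nonneg (u n - ustar)) with h0 | h0
    · rw [← h0]
      positivity
    · have h4 : ν * ‖u n - ustar‖ ^ 2 ≤ β * ‖u (n + 1) - u n‖ * ‖u n - ustar‖ :=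
        le_trans h2 h3
      have h5 : ν * ‖u n - ustar‖ ≤ β * ‖u (n + 1) - u n‖ := by
        have h4' : ν * ‖u n - ustar‖ * ‖u n - ustar‖
            ≤ β * ‖u (n + 1) - u n‖ * ‖u n - ustar‖ := by
          have hx : ν * ‖u n - ustar‖ * ‖u n - ustar‖ = ν * ‖u n - ustar‖ ^ 2 := by ring
          rw [hx]
          exact h4
        exact le_of_mul_le_mul_right h4' h0
      rw [hC₃]
      have hnn : (0:ℝ) ≤ ‖u (n + 1) - u n‖ := norm_nonneg _
      have key : ν * ‖u n - ustar‖ ≤ ν * ((1 + β / ν) * ‖u (n + 1) - u n‖) := by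
        have he : ν * ((1 + β / ν) * ‖u (n + 1) - u n‖)
            = ν * ‖u (n + 1) - u n‖ + β * ‖u (n + 1) - u n‖ := by
          field_simp
        rw [he]
        linarith [mul_nonneg hν.le hnn, h5]
      exact le_of_mul_le_mul_left key hν
  -- the energy gap
  obtain ⟨ε, hεd⟩ : ∃ ε : ℕ → ℝ, ∀ n, ε n = H (u n) - H ustar := ⟨_, fun _ => rfl⟩
  have hεnonneg : ∀ n, 0 ≤ ε n := by
    intro n; rw [hεd]; linarith [hBmin (u n)]
  have hc4 : C₄ * CH = L * C₃ ^ 2 / 2 := by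
    rw [hC₄]; field_simp
  have hup : ∀ n : ℕ, ε n ≤ C₄ * CH * ‖u (n + 1) - u n‖ ^ 2 := by
    intro n
    have h1 := hAup (u n)
    have h2 := hCpost n
    have h3 : ‖u n - ustar‖ ^ 2 ≤ C₃ ^ 2 * ‖u (n + 1) - u n‖ ^ 2 := by
      have h := pow_le_pow_left₀ (norm_nonneg (u n - ustar)) h2 2
      rwa [mul_pow] at h
    calc ε n = H (u n) - H ustar := hεd n
      _ ≤ L / 2 * ‖u n - ustar‖ ^ 2 := h1
      _ ≤ L / 2 * (C₃ ^ 2 * ‖u (n + 1) - u n‖ ^ 2) :=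
          mul_le_mul_of_nonneg_left h3 (by positivity)
      _ = C₄ * CH * ‖u (n + 1) - u n‖ ^ 2 := by rw [hc4]; ring
  -- one-step contraction of ε
  have hstep : ∀ n : ℕ, ε (n + 1) ≤ q * ε n := by
    intro n
    have h4 := hF4 (n + 1) (by omega)
    simp only [Nat.add_sub_cancel] at h4
    have hgap : CH * ‖u (n + 1) - u n‖ ^ 2 ≤ ε n - ε (n + 1) := by
      rw [hεd, hεd]; linarith
    have hkey : ε n ≤ C₄ * (ε n - ε (n + 1)) := by
      calc ε n ≤ C₄ * CH * ‖u (n + 1) - u n‖ ^ 2 := hup n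
        _ = C₄ * (CH * ‖u (n + 1) - u n‖ ^ 2) := by ring
        _ ≤ C₄ * (ε n - ε (n + 1)) := mul_le_mul_of_nonneg_left hgap hC₄pos.le
    have hmonoε : ε (n + 1) ≤ ε n := by
      have hp : (0:ℝ) ≤ CH * ‖u (n + 1) - u n‖ ^ 2 := by positivity
      linarith
    have h6 : ε (n + 1) * (1 + C₄) ≤ C₄ * ε n := by
      have e1 : ε (n + 1) * (1 + C₄) = ε (n + 1) + C₄ * ε (n + 1) := by ring
      have e2 : C₄ * (ε n - ε (n + 1)) = C₄ * ε n - C₄ * ε (n + 1) := by ring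
      rw [e1]
      linarith [hkey, hmonoε, e2]
    rw [hqeq, div_mul_eq_mul_div, le_div_iff₀ (by linarith : (0:ℝ) < 1 + C₄)]
    linarith [h6]
  -- geometric decay
  have hgeo : ∀ m : ℕ, ε m ≤ q ^ m * ε 0 := by
    intro m
    induction m with
    | zero => simp
    | succ k ih =>
      calc ε (k + 1) ≤ q * ε k := hstep k
        _ ≤ q * (q ^ k * ε 0) := mul_le_mul_of_nonneg_left ih hqpos.le
        _ = q ^ (k + 1) * ε 0 := by ring
  -- conclusion
  intro n hn
  have hzpow : (1 + C₄⁻¹ : ℝ) ^ ((2 : ℤ) - (n : ℤ)) = q ^ (n - 2) := by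
    have hcast : ((2 : ℤ) - (n : ℤ)) = -(((n - 2 : ℕ) : ℤ)) := by
      have h2 : ((n - 2 : ℕ) : ℤ) = (n : ℤ) - 2 := by omega
      omega
    rw [hcast, zpow_neg, zpow_natCast, hq, hb, inv_pow]
  rw [hzpow]
  have h4 := hF4 n (by omega)
  have h5 : CH * ‖u n - u (n - 1)‖ ^ 2 ≤ ε (n - 1) := by
    rw [hεd]
    linarith [hBmin (u n)]
  have hqp : (0:ℝ) ≤ q ^ (n - 2) := le_of_lt (pow_pos hqpos _)
  have h6 : ε (n - 1) ≤ q ^ (n - 2) * ε 0 := by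
    have heq : n - 1 = (n - 2) + 1 := by omega
    rw [heq]
    calc ε ((n - 2) + 1) ≤ q ^ ((n - 2) + 1) * ε 0 := hgeo _
      _ = q ^ (n - 2) * q * ε 0 := by rw [pow_succ]
      _ ≤ q ^ (n - 2) * 1 * ε 0 :=
          mul_le_mul_of_nonneg_right (mul_le_mul_of_nonneg_left hq1 hqp) (hεnonneg 0)
      _ = q ^ (n - 2) * ε 0 := by ring
  have h7 : ε 0 ≤ C₄ * CH * ‖u 1 - u 0‖ ^ 2 := by
    simpa using hup 0
  have h8 : CH * ‖u n - u (n - 1)‖ ^ 2 ≤ q ^ (n - 2) * (C₄ * CH * ‖u 1 - u 0‖ ^ 2) := by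
    calc CH * ‖u n - u (n - 1)‖ ^ 2 ≤ ε (n - 1) := h5
      _ ≤ q ^ (n - 2) * ε 0 := h6
      _ ≤ q ^ (n - 2) * (C₄ * CH * ‖u 1 - u 0‖ ^ 2) := mul_le_mul_of_nonneg_left h7 hqp
  have hring : q ^ (n - 2) * (C₄ * CH * ‖u 1 - u 0‖ ^ 2)
      = CH * (C₄ * q ^ (n - 2) * ‖u 1 - u 0‖ ^ 2) := by ring
  rw [hring] at h8
  exact le_of_mul_le_mul_left h8 hCH
end

section
/- Suppose (F1)–(F4) hold and the bilinear form a(·;·,·) is uniformly coercive and bounded. Then ‖uⁿ − uⁿ⁻¹‖_X → 0 as n → ∞. -/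
set_option autoImplicit false

/-- Under (F1)–(F4) and uniform coercivity/boundedness, `‖uⁿ − uⁿ⁻¹‖ → 0` as `n → ∞`. -/
theorem stmt_5
    {X : Type*} [NormedAddCommGroup X] [InnerProductSpace ℝ X] [CompleteSpace X]
    (F : X → X →L[ℝ] ℝ) (L ν : ℝ) (hL : 0 < L) (hν : 0 < ν)
    (hF1 : ∀ u v w : X, |F u w - F v w| ≤ L * ‖u - v‖ * ‖w‖)
    (hF2 : ∀ u v : X, ν * ‖u - v‖ ^ 2 ≤ F u (u - v) - F v (u - v))
    (ustar : X) (hustar : ∀ v : X, F ustar v = 0)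
    (a : X → X →ₗ[ℝ] X →ₗ[ℝ] ℝ) (α β : ℝ) (hα : 0 < α) (hβ : 0 < β)
    (hcoer : ∀ u v : X, α * ‖v‖ ^ 2 ≤ a u v v)
    (hbdd : ∀ u v w : X, a u v w ≤ β * ‖v‖ * ‖w‖)
    (u : ℕ → X)
    (hiter : ∀ n : ℕ, ∀ w : X, a (u n) (u (n + 1)) w = a (u n) (u n) w - F (u n) w)
    (H : X → ℝ)
    (hF3 : ∀ v w : X, ∀ t : ℝ, HasDerivAt (fun s : ℝ => H (v + s • w)) (F (v + t • w) w) t)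
    (CH : ℝ) (hCH : 0 < CH)
    (hF4 : ∀ n : ℕ, 1 ≤ n → CH * ‖u n - u (n - 1)‖ ^ 2 ≤ H (u (n - 1)) - H (u n)) :
    Filter.Tendsto (fun n : ℕ => ‖u n - u (n - 1)‖) Filter.atTop (nhds 0) := by
  -- H is bounded below by H ustar
  have hlow : ∀ v : X, H ustar ≤ H v := by
    intro v
    set d := v - ustar with hd
    have hderiv : ∀ t ∈ Set.Ioo (0:ℝ) 1,
        HasDerivAt (fun s : ℝ => H (ustar + s • d)) (F (ustar + t • d) d) t := by
      intro t _; exact hF3 ustar d t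
    have hcont : ContinuousOn (fun s : ℝ => H (ustar + s • d)) (Set.Icc 0 1) := by
      intro t _
      exact ((hF3 ustar d t).continuousAt).continuousWithinAt
    obtain ⟨c, hc, hceq⟩ := exists_hasDerivAt_eq_slope (fun s : ℝ => H (ustar + s • d))
      (fun t => F (ustar + t • d) d) (by norm_num) hcont hderiv
    have h1 : ustar + (1:ℝ) • d = v := by simp [hd]
    have h0 : ustar + (0:ℝ) • d = ustar := by simp
    have hcpos : 0 < c := hc.1
    -- strong monotonicity gives F (ustar + c • d) d ≥ 0
    have hmono := hF2 (ustar + c • d) ustar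
    have hsub : (ustar + c • d) - ustar = c • d := by abel
    rw [hsub, hustar] at hmono
    have hFc : 0 ≤ F (ustar + c • d) d := by
      have hm : ν * ‖c • d‖ ^ 2 ≤ c * F (ustar + c • d) d := by
        have := hmono
        rw [map_smul] at this
        simpa using this
      nlinarith [hm, hcpos, sq_nonneg ‖c • d‖, hν.le]
    rw [h1, h0] at hceq
    have hfin : F (ustar + c • d) d = H v - H ustar := by rw [hceq]; ring
    linarith
  -- the sequence h n = H (u n) is antitone and bounded below
  set h : ℕ → ℝ := fun n => H (u n) with hh
  have hanti : Antitone h := by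
    apply antitone_nat_of_succ_le
    intro n
    have := hF4 (n + 1) (Nat.le_add_left 1 n)
    simp only [Nat.add_sub_cancel] at this
    have h0 : 0 ≤ CH * ‖u (n + 1) - u n‖ ^ 2 := by positivity
    simp only [hh]
    linarith
  have hbdd' : BddBelow (Set.range h) := ⟨H ustar, by rintro x ⟨n, rfl⟩; exact hlow (u n)⟩
  have hlim : Filter.Tendsto h Filter.atTop (nhds (⨅ n, h n)) :=
    tendsto_atTop_ciInf hanti hbdd'
  -- the shifted sequence also converges to the same limit
  have hshift : Filter.Tendsto (fun n => h (n - 1)) Filter.atTop (nhds (⨅ n, h n)) :=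
    hlim.comp (Filter.tendsto_sub_atTop_nat 1)
  have hdiff : Filter.Tendsto (fun n => h (n - 1) - h n) Filter.atTop (nhds 0) := by
    have := hshift.sub hlim
    simpa using this
  -- squeeze for the squared norms
  have hsq : Filter.Tendsto (fun n => ‖u n - u (n - 1)‖ ^ 2) Filter.atTop (nhds 0) := by
    have hdiv : Filter.Tendsto (fun n => CH⁻¹ * (h (n - 1) - h n)) Filter.atTop (nhds 0) := by
      simpa using hdiff.const_mul (CH⁻¹)
    apply tendsto_of_tendsto_of_tendsto_of_le_of_le' tendsto_const_nhds hdiv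
    · exact Filter.Eventually.of_forall fun n => sq_nonneg _
    · filter_upwards [Filter.eventually_ge_atTop 1] with n hn
      have := hF4 n hn
      rw [le_inv_mul_iff₀ hCH]
      simpa [hh] using this
  -- conclude via sqrt
  have heq : (fun n : ℕ => ‖u n - u (n - 1)‖)
      = fun n => Real.sqrt (‖u n - u (n - 1)‖ ^ 2) :=
    funext fun n => (Real.sqrt_sq (norm_nonneg _)).symm
  rw [heq]
  have h2 := (Real.continuous_sqrt.tendsto 0).comp hsq
  simp only [Function.comp_def, Real.sqrt_zero] at h2
  exact h2
end

section
/- Suppose (F1)–(F4) hold and the bilinear form a(·;·,·) is uniformly coercive and bounded. Then the iterative linearization sequence (uⁿ)_{n≥0} converges in X to the unique solution u* of ⟨F(u*), v⟩ = 0 for all v ∈ X. -/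
set_option autoImplicit false

/-- Under (F1)–(F4) and uniform coercivity/boundedness, the iterative linearization
sequence converges in `X` to the unique solution `u*` of `⟨F(u*), v⟩ = 0` for all `v`. -/
theorem stmt_6
    {X : Type*} [NormedAddCommGroup X] [InnerProductSpace ℝ X] [CompleteSpace X]
    (F : X → X →L[ℝ] ℝ) (L ν : ℝ) (hL : 0 < L) (hν : 0 < ν)
    (hF1 : ∀ u v w : X, |F u w - F v w| ≤ L * ‖u - v‖ * ‖w‖)
    (hF2 : ∀ u v : X, ν * ‖u - v‖ ^ 2 ≤ F u (u - v) - F v (u - v))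
    (ustar : X) (hustar : ∀ v : X, F ustar v = 0)
    (a : X → X →ₗ[ℝ] X →ₗ[ℝ] ℝ) (α β : ℝ) (hα : 0 < α) (hβ : 0 < β)
    (hcoer : ∀ u v : X, α * ‖v‖ ^ 2 ≤ a u v v)
    (hbdd : ∀ u v w : X, a u v w ≤ β * ‖v‖ * ‖w‖)
    (u : ℕ → X)
    (hiter : ∀ n : ℕ, ∀ w : X, a (u n) (u (n + 1)) w = a (u n) (u n) w - F (u n) w)
    (H : X → ℝ)
    (hF3 : ∀ v w : X, ∀ t : ℝ, HasDerivAt (fun s : ℝ => H (v + s • w)) (F (v + t • w) w) t)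
    (CH : ℝ) (hCH : 0 < CH)
    (hF4 : ∀ n : ℕ, 1 ≤ n → CH * ‖u n - u (n - 1)‖ ^ 2 ≤ H (u (n - 1)) - H (u n)) :
    Filter.Tendsto u Filter.atTop (nhds ustar) := by
  -- Step 1: H is bounded below by H ustar
  have Hlow : ∀ v : X, H ustar ≤ H v := by
    intro v
    set w := v - ustar with hw
    have hg : ∀ t : ℝ, HasDerivAt (fun s : ℝ => H (ustar + s • w)) (F (ustar + t • w) w) t :=
      fun t => hF3 ustar w t
    have hmono : MonotoneOn (fun s : ℝ => H (ustar + s • w)) (Set.Icc 0 1) := by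
      apply monotoneOn_of_deriv_nonneg (convex_Icc 0 1)
      · exact Continuous.continuousOn
          (continuous_iff_continuousAt.mpr fun x => (hg x).continuousAt)
      · exact fun x _ => (hg x).differentiableAt.differentiableWithinAt
      · intro x hx
        rw [interior_Icc] at hx
        rw [(hg x).deriv]
        have h2 := hF2 (ustar + x • w) ustar
        have hx0 : 0 < x := hx.1
        have hsub : ustar + x • w - ustar = x • w := by abel
        rw [hsub, map_smul, map_smul, hustar] at h2
        simp only [smul_eq_mul, mul_zero, sub_zero] at h2
        have hnn : 0 ≤ ν * ‖x • w‖ ^ 2 := by positivity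
        nlinarith [h2]
    have h01 := hmono (Set.mem_Icc.mpr ⟨le_refl 0, zero_le_one⟩)
      (Set.mem_Icc.mpr ⟨zero_le_one, le_refl 1⟩) zero_le_one
    simpa [hw] using h01
  -- Step 2: H (u n) is antitone
  have hanti : Antitone (fun n => H (u n)) := by
    apply antitone_nat_of_succ_le
    intro n
    have h4 := hF4 (n + 1) (by omega)
    simp only [Nat.add_sub_cancel] at h4
    nlinarith [sq_nonneg ‖u (n+1) - u n‖]
  -- Step 3: H (u n) converges
  have hbdd' : BddBelow (Set.range fun n => H (u n)) :=
    ⟨H ustar, by rintro x ⟨n, rfl⟩; exact Hlow (u n)⟩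
  have hconv := tendsto_atTop_ciInf hanti hbdd'
  set l := ⨅ n, H (u n)
  -- Step 4: differences tend to 0
  have hdiff : Filter.Tendsto (fun n => H (u n) - H (u (n + 1))) Filter.atTop (nhds 0) := by
    have := hconv.sub (hconv.comp (Filter.tendsto_add_atTop_nat 1))
    simpa using this
  -- Step 5: ‖u (n+1) - u n‖ → 0
  have hsqle : ∀ n, ‖u (n + 1) - u n‖ ^ 2 ≤ (H (u n) - H (u (n + 1))) / CH := by
    intro n
    have h4 := hF4 (n + 1) (by omega)
    simp only [Nat.add_sub_cancel] at h4
    rw [le_div_iff₀ hCH]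
    linarith
  have hsq0 : Filter.Tendsto (fun n => ‖u (n + 1) - u n‖ ^ 2) Filter.atTop (nhds 0) := by
    apply squeeze_zero (fun n => by positivity) hsqle
    simpa using hdiff.div_const CH
  have hdel0 : Filter.Tendsto (fun n => ‖u (n + 1) - u n‖) Filter.atTop (nhds 0) := by
    have h := (Real.continuous_sqrt.tendsto 0).comp hsq0
    have heq : (Real.sqrt ∘ fun n => ‖u (n + 1) - u n‖ ^ 2) = fun n => ‖u (n + 1) - u n‖ :=
      funext fun n => Real.sqrt_sq (norm_nonneg _)
    rw [heq] at h
    simpa using h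
  -- Step 6: ‖u n - ustar‖ ≤ (β/ν) ‖u (n+1) - u n‖
  have hkey : ∀ n, ‖u n - ustar‖ ≤ (β / ν) * ‖u (n + 1) - u n‖ := by
    intro n
    have h2 := hF2 (u n) ustar
    rw [hustar] at h2
    have hiterw := hiter n (u n - ustar)
    have hFeq : F (u n) (u n - ustar) = a (u n) (u n - u (n + 1)) (u n - ustar) := by
      have hms : ((a (u n)) (u n - u (n + 1))) (u n - ustar)
          = ((a (u n)) (u n)) (u n - ustar) - ((a (u n)) (u (n + 1))) (u n - ustar) := by
        simp only [map_sub, LinearMap.sub_apply]; ring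
      linarith [hiterw, hms]
    have hb := hbdd (u n) (u n - u (n + 1)) (u n - ustar)
    have hnorm : ‖u n - u (n + 1)‖ = ‖u (n + 1) - u n‖ := norm_sub_rev _ _
    have h3 : ν * ‖u n - ustar‖ ^ 2 ≤ β * ‖u (n + 1) - u n‖ * ‖u n - ustar‖ := by
      rw [hFeq] at h2
      rw [hnorm] at hb
      linarith
    rcases eq_or_lt_of_le (norm_nonneg (u n - ustar)) with he | he
    · rw [← he]; positivity
    · have h4 : ν * ‖u n - ustar‖ ≤ β * ‖u (n + 1) - u n‖ := by nlinarith
      rw [div_mul_eq_mul_div, le_div_iff₀ hν]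
      nlinarith
  -- Conclude
  rw [tendsto_iff_norm_sub_tendsto_zero]
  apply squeeze_zero (fun n => norm_nonneg _) hkey
  simpa using (hdel0.const_mul (β / ν))
end

section
/- Suppose F satisfies (F1)–(F3) and let (uⁿ)_{n≥0} be the iterative linearization sequence. Then for every n ≥ 1 it holds that H(uⁿ⁻¹) − H(uⁿ) = a(uⁿ⁻¹; uⁿ − uⁿ⁻¹, uⁿ − uⁿ⁻¹) − ∫₀¹ ⟨F(uⁿ⁻¹ + t(uⁿ − uⁿ⁻¹)) − F(uⁿ⁻¹), uⁿ − uⁿ⁻¹⟩ dt. -/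
/-! With `d = uⁿ − uⁿ⁻¹`, the fundamental theorem of calculus along the segment from `uⁿ⁻¹` to `uⁿ`
gives `H(uⁿ⁻¹) − H(uⁿ) = −∫₀¹ ⟨F(uⁿ⁻¹ + t d), d⟩ dt`, the integrand being continuous because `F` is
Lipschitz. Testing the linearized equation with `w = d` gives `a(uⁿ⁻¹; d, d) = −⟨F(uⁿ⁻¹), d⟩`. -/

open intervalIntegral

section

variable {𝕜 X E G : Type*} [NontriviallyNormedField 𝕜] [SeminormedAddCommGroup X]
  [SeminormedAddCommGroup E] [NormedSpace 𝕜 E] [SeminormedAddCommGroup G] [NormedSpace 𝕜 G]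

theorem lipschitzWith_of_norm_apply_sub_le {F : X → E →L[𝕜] G} {L : ℝ}
    (hF : ∀ u v w, ‖F u w - F v w‖ ≤ L * ‖u - v‖ * ‖w‖) :
    LipschitzWith (Real.toNNReal L) F := by
  refine LipschitzWith.of_dist_le_mul fun u v => ?_
  rw [dist_eq_norm, dist_eq_norm, Real.coe_toNNReal']
  refine ContinuousLinearMap.opNorm_le_bound _ (by positivity) fun w => ?_
  calc ‖(F u - F v) w‖ = ‖F u w - F v w‖ := rfl
    _ ≤ L * ‖u - v‖ * ‖w‖ := hF u v w
    _ ≤ max L 0 * ‖u - v‖ * ‖w‖ := by gcongr; exact le_max_left L 0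

end

section

variable {X : Type*} [NormedAddCommGroup X] [NormedSpace ℝ X]

theorem sub_eq_integral_of_hasDerivAt_segment {F : X → X →L[ℝ] ℝ} (hF : Continuous F)
    {H : X → ℝ} {v d : X}
    (hH : ∀ t : ℝ, HasDerivAt (fun s : ℝ => H (v + s • d)) (F (v + t • d) d) t) :
    H (v + d) - H v = ∫ t in (0 : ℝ)..1, F (v + t • d) d := by
  have hcont : Continuous fun t : ℝ => F (v + t • d) d := by fun_prop
  rw [integral_eq_sub_of_hasDerivAt (fun t _ => hH t) (hcont.intervalIntegrable 0 1)]
  simp only [one_smul, zero_smul, add_zero]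

end

theorem stmt_7_general
    {X : Type*} [NormedAddCommGroup X] [InnerProductSpace ℝ X]
    (F : X → X →L[ℝ] ℝ) (L : ℝ)
    (hF1 : ∀ u v w : X, |F u w - F v w| ≤ L * ‖u - v‖ * ‖w‖)
    (a : X → X →ₗ[ℝ] X →ₗ[ℝ] ℝ)
    (u : ℕ → X)
    (hiter : ∀ n : ℕ, ∀ w : X, a (u n) (u (n + 1)) w = a (u n) (u n) w - F (u n) w)
    (H : X → ℝ)
    (hF3 : ∀ v w : X, ∀ t : ℝ, HasDerivAt (fun s : ℝ => H (v + s • w)) (F (v + t • w) w) t) :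
    ∀ n : ℕ, 1 ≤ n →
      H (u (n - 1)) - H (u n) =
        a (u (n - 1)) (u n - u (n - 1)) (u n - u (n - 1)) -
          ∫ t in (0 : ℝ)..1,
            (F (u (n - 1) + t • (u n - u (n - 1))) (u n - u (n - 1)) -
              F (u (n - 1)) (u n - u (n - 1))) := by
  intro n hn
  obtain ⟨m, rfl⟩ : ∃ m, n = m + 1 := ⟨n - 1, (Nat.sub_add_cancel hn).symm⟩
  rw [Nat.add_sub_cancel]
  set d := u (m + 1) - u m
  have hF : Continuous F :=
    (lipschitzWith_of_norm_apply_sub_le (by simpa only [Real.norm_eq_abs] using hF1)).continuous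
  have hpotential : H (u m + d) - H (u m) = ∫ t in (0 : ℝ)..1, F (u m + t • d) d :=
    sub_eq_integral_of_hasDerivAt_segment hF (hF3 (u m) d)
  have hstep : a (u m) d d = -F (u m) d := by
    simp only [d, map_sub, LinearMap.sub_apply, hiter]
    ring
  have hint : IntervalIntegrable (fun t : ℝ => F (u m + t • d) d) MeasureTheory.volume 0 1 :=
    (by fun_prop : Continuous fun t : ℝ => F (u m + t • d) d).intervalIntegrable 0 1
  rw [integral_sub hint intervalIntegrable_const, ← hpotential, hstep, add_sub_cancel,
    integral_const]
  simp only [sub_zero, one_smul]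
  ring

/-- Energy-difference identity: under (F1)–(F3), for every `n ≥ 1`,
`H(uⁿ⁻¹) − H(uⁿ) = a(uⁿ⁻¹; uⁿ−uⁿ⁻¹, uⁿ−uⁿ⁻¹) − ∫₀¹ ⟨F(uⁿ⁻¹+t(uⁿ−uⁿ⁻¹)) − F(uⁿ⁻¹), uⁿ−uⁿ⁻¹⟩ dt`. -/
theorem stmt_7
    {X : Type*} [NormedAddCommGroup X] [InnerProductSpace ℝ X] [CompleteSpace X]
    (F : X → X →L[ℝ] ℝ) (L ν : ℝ) (hL : 0 < L) (hν : 0 < ν)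
    (hF1 : ∀ u v w : X, |F u w - F v w| ≤ L * ‖u - v‖ * ‖w‖)
    (hF2 : ∀ u v : X, ν * ‖u - v‖ ^ 2 ≤ F u (u - v) - F v (u - v))
    (a : X → X →ₗ[ℝ] X →ₗ[ℝ] ℝ) (α β : ℝ) (hα : 0 < α) (hβ : 0 < β)
    (hcoer : ∀ u v : X, α * ‖v‖ ^ 2 ≤ a u v v)
    (hbdd : ∀ u v w : X, a u v w ≤ β * ‖v‖ * ‖w‖)
    (u : ℕ → X)
    (hiter : ∀ n : ℕ, ∀ w : X, a (u n) (u (n + 1)) w = a (u n) (u n) w - F (u n) w)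
    (H : X → ℝ)
    (hF3 : ∀ v w : X, ∀ t : ℝ, HasDerivAt (fun s : ℝ => H (v + s • w)) (F (v + t • w) w) t) :
    ∀ n : ℕ, 1 ≤ n →
      H (u (n - 1)) - H (u n) =
        a (u (n - 1)) (u n - u (n - 1)) (u n - u (n - 1)) -
          ∫ t in (0 : ℝ)..1,
            (F (u (n - 1) + t • (u n - u (n - 1))) (u n - u (n - 1)) -
              F (u (n - 1)) (u n - u (n - 1))) :=
  stmt_7_general F L hF1 a u hiter H hF3
end

section
/- Suppose F satisfies (F1)–(F3), and suppose the bilinear form a(·;·,·) of the iterative linearization scheme is uniformly coercive with coercivity constant α > L/2. Then condition (F4) holds with C_H = α − L/2; that is, H(uⁿ⁻¹) − H(uⁿ) ≥ (α − L/2)‖uⁿ − uⁿ⁻¹‖_X² for all n ≥ 1, for the iterative linearization sequence (uⁿ)_{n≥0}. -/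
set_option autoImplicit false

open Set

/-! Write `v = uⁿ⁻¹` and `e = uⁿ − uⁿ⁻¹`. Testing the linearized equation with `w = e` gives
`⟨F(v), e⟩ = −a(v; e, e) ≤ −α‖e‖²`. Along the segment `s ↦ v + s e`, the derivative
`⟨F(v + s e), e⟩` of `H` exceeds `⟨F(v), e⟩` by at most `L s ‖e‖²` by (F1), so comparing
`s ↦ H(v + s e)` on `[0, 1]` with a quadratic gives `H(uⁿ) − H(uⁿ⁻¹) ≤ ⟨F(v), e⟩ + (L/2)‖e‖² ≤ −(α − L/2)‖e‖²`. -/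

theorem sub_le_of_hasDerivAt_le_affine {f f' : ℝ → ℝ} {c K : ℝ}
    (hf : ∀ t ∈ Icc (0 : ℝ) 1, HasDerivAt f (f' t) t)
    (hf' : ∀ t ∈ Icc (0 : ℝ) 1, f' t ≤ c + K * t) :
    f 1 - f 0 ≤ c + K / 2 := by
  have hB : ∀ t : ℝ, HasDerivAt (fun s => f 0 + c * s + K / 2 * s ^ 2) (c + K * t) t := by
    intro t
    refine ((((hasDerivAt_id' t).const_mul c).const_add (f 0)).add
      ((hasDerivAt_pow 2 t).const_mul (K / 2))).congr_deriv ?_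
    norm_num
    ring
  have key := image_le_of_deriv_right_le_deriv_boundary (a := 0) (b := 1) (f' := f')
    (fun t ht => (hf t ht).continuousAt.continuousWithinAt)
    (fun t ht => (hf t (Ico_subset_Icc_self ht)).hasDerivWithinAt)
    (B := fun s => f 0 + c * s + K / 2 * s ^ 2) (by simp)
    (fun t _ => (hB t).continuousAt.continuousWithinAt) (fun t _ => (hB t).hasDerivWithinAt)
    (fun t ht => hf' t (Ico_subset_Icc_self ht)) (right_mem_Icc.2 zero_le_one)
  simp only [mul_one, one_pow] at key
  linarith

section

variable {X : Type*} [NormedAddCommGroup X] [NormedSpace ℝ X]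

theorem apply_sub_le_neg_of_coercive {a : X →ₗ[ℝ] X →ₗ[ℝ] ℝ} {α : ℝ}
    (hcoer : ∀ v : X, α * ‖v‖ ^ 2 ≤ a v v) {f : X →L[ℝ] ℝ} {x y : X}
    (hxy : ∀ w : X, a x w = a y w - f w) :
    f (x - y) ≤ -(α * ‖x - y‖ ^ 2) := by
  have hfa : f (x - y) = -a (x - y) (x - y) := by
    rw [map_sub a, LinearMap.sub_apply, hxy]
    ring
  linarith [hcoer (x - y)]

theorem potential_add_sub_le {F : X → X →L[ℝ] ℝ} {L : ℝ}
    (hF1 : ∀ u v w : X, |F u w - F v w| ≤ L * ‖u - v‖ * ‖w‖) {H : X → ℝ}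
    (hF3 : ∀ v w : X, ∀ t : ℝ, HasDerivAt (fun s : ℝ => H (v + s • w)) (F (v + t • w) w) t)
    (v e : X) :
    H (v + e) - H v ≤ F v e + L * ‖e‖ ^ 2 / 2 := by
  have hslope : ∀ t ∈ Icc (0 : ℝ) 1, F (v + t • e) e ≤ F v e + L * ‖e‖ ^ 2 * t := by
    intro t ht
    have h := hF1 (v + t • e) v e
    rw [add_sub_cancel_left, norm_smul, Real.norm_of_nonneg ht.1] at h
    linarith [(abs_le.1 h).2]
  simpa using sub_le_of_hasDerivAt_le_affine (fun t _ => hF3 v e t) hslope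

end

theorem stmt_8_general
    {X : Type*} [NormedAddCommGroup X] [InnerProductSpace ℝ X]
    (F : X → X →L[ℝ] ℝ) (L : ℝ)
    (hF1 : ∀ u v w : X, |F u w - F v w| ≤ L * ‖u - v‖ * ‖w‖)
    (a : X → X →ₗ[ℝ] X →ₗ[ℝ] ℝ) (α : ℝ)
    (hcoer : ∀ u v : X, α * ‖v‖ ^ 2 ≤ a u v v)
    (u : ℕ → X)
    (hiter : ∀ n : ℕ, ∀ w : X, a (u n) (u (n + 1)) w = a (u n) (u n) w - F (u n) w)
    (H : X → ℝ)
    (hF3 : ∀ v w : X, ∀ t : ℝ, HasDerivAt (fun s : ℝ => H (v + s • w)) (F (v + t • w) w) t) :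
    ∀ n : ℕ, 1 ≤ n →
      (α - L / 2) * ‖u n - u (n - 1)‖ ^ 2 ≤ H (u (n - 1)) - H (u n) := by
  intro n hn
  obtain ⟨m, rfl⟩ := Nat.exists_eq_add_of_le' hn
  rw [Nat.add_sub_cancel]
  have hdescent := apply_sub_le_neg_of_coercive (hcoer (u m)) (hiter m)
  have hpot := potential_add_sub_le hF1 hF3 (u m) (u (m + 1) - u m)
  rw [add_sub_cancel] at hpot
  linarith

/-- If (F1)–(F3) hold and the bilinear form is uniformly coercive with constant
`α > L/2`, then (F4) holds with `C_H = α − L/2`. -/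
theorem stmt_8
    {X : Type*} [NormedAddCommGroup X] [InnerProductSpace ℝ X] [CompleteSpace X]
    (F : X → X →L[ℝ] ℝ) (L ν : ℝ) (hL : 0 < L) (hν : 0 < ν)
    (hF1 : ∀ u v w : X, |F u w - F v w| ≤ L * ‖u - v‖ * ‖w‖)
    (hF2 : ∀ u v : X, ν * ‖u - v‖ ^ 2 ≤ F u (u - v) - F v (u - v))
    (a : X → X →ₗ[ℝ] X →ₗ[ℝ] ℝ) (α β : ℝ) (hα : 0 < α) (hβ : 0 < β)
    (hcoer : ∀ u v : X, α * ‖v‖ ^ 2 ≤ a u v v)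
    (hbdd : ∀ u v w : X, a u v w ≤ β * ‖v‖ * ‖w‖)
    (hαL : L / 2 < α)
    (u : ℕ → X)
    (hiter : ∀ n : ℕ, ∀ w : X, a (u n) (u (n + 1)) w = a (u n) (u n) w - F (u n) w)
    (H : X → ℝ)
    (hF3 : ∀ v w : X, ∀ t : ℝ, HasDerivAt (fun s : ℝ => H (v + s • w)) (F (v + t • w) w) t) :
    ∀ n : ℕ, 1 ≤ n →
      (α - L / 2) * ‖u n - u (n - 1)‖ ^ 2 ≤ H (u (n - 1)) - H (u n) :=
  stmt_8_general F L hF1 a α hcoer u hiter H hF3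
end

section
/- Suppose F satisfies (F1)–(F2) and the estimator η satisfies (A1). Let (uⁿ)_{n≥0} ⊂ Y be the iterative linearization sequence restricted to Y, and suppose for some n ≥ 1 that ‖uⁿ − uⁿ⁻¹‖_X ≤ λ η(uⁿ) with 0 < λ < 1/C₅, where C₅ := C₃ C₁ and C₃ := 1 + β/ν. Then ‖u*_Y − uⁿ‖_X ≤ λ C₃ min{ η(uⁿ), (1 − λ C₅)⁻¹ η(u*_Y) }. -/
/-!
Testing the linearization step `a(uⁿ⁻¹; uⁿ − uⁿ⁻¹, w) = −⟨F(uⁿ⁻¹), w⟩` with `w = u*_Y − uⁿ⁻¹ ∈ Y`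
and using `F(u*_Y) = 0` on `Y`, strong monotonicity gives
`ν‖u*_Y − uⁿ⁻¹‖² ≤ a(uⁿ⁻¹; uⁿ − uⁿ⁻¹, u*_Y − uⁿ⁻¹) ≤ β‖uⁿ − uⁿ⁻¹‖‖u*_Y − uⁿ⁻¹‖`, so by the triangle
inequality `‖u*_Y − uⁿ‖ ≤ C₃‖uⁿ − uⁿ⁻¹‖ ≤ λC₃η(uⁿ)`. Feeding this into (A1) gives
`η(uⁿ) ≤ η(u*_Y) + λC₅η(uⁿ)`, which is the second bound after absorbing the last term.
-/

set_option autoImplicit false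

section LinearizationStep

variable {X : Type*} [NormedAddCommGroup X] [NormedSpace ℝ X]
  {F : X → X →L[ℝ] ℝ} {ν β : ℝ} {b : X →ₗ[ℝ] X →ₗ[ℝ] ℝ} {Y : Submodule ℝ X} {u' v v' : X}

theorem norm_sub_le_div_mul_norm_of_linearization_step (hν : 0 < ν) (hβ : 0 ≤ β)
    (hF : ∀ u v : X, ν * ‖u - v‖ ^ 2 ≤ F u (u - v) - F v (u - v))
    (hb : ∀ v w : X, b v w ≤ β * ‖v‖ * ‖w‖)
    (hu'Y : u' ∈ Y) (hu' : ∀ w ∈ Y, F u' w = 0)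
    (hv : v ∈ Y) (hstep : ∀ w ∈ Y, b v' w = b v w - F v w) :
    ‖u' - v‖ ≤ β / ν * ‖v' - v‖ := by
  set e := u' - v
  have he : e ∈ Y := Y.sub_mem hu'Y hv
  have key : ν * ‖e‖ ^ 2 ≤ β * ‖v' - v‖ * ‖e‖ :=
    calc ν * ‖e‖ ^ 2 ≤ F u' e - F v e := hF u' v
      _ = b (v' - v) e := by rw [hu' e he, LinearMap.map_sub₂, hstep e he]; ring
      _ ≤ β * ‖v' - v‖ * ‖e‖ := hb _ _
  rw [div_mul_eq_mul_div, le_div_iff₀ hν]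
  rcases (norm_nonneg e).eq_or_lt with h0 | h0
  · rw [← h0, zero_mul]
    positivity
  · nlinarith

theorem norm_sub_le_one_add_div_mul_norm_of_linearization_step (hν : 0 < ν) (hβ : 0 ≤ β)
    (hF : ∀ u v : X, ν * ‖u - v‖ ^ 2 ≤ F u (u - v) - F v (u - v))
    (hb : ∀ v w : X, b v w ≤ β * ‖v‖ * ‖w‖)
    (hu'Y : u' ∈ Y) (hu' : ∀ w ∈ Y, F u' w = 0)
    (hv : v ∈ Y) (hstep : ∀ w ∈ Y, b v' w = b v w - F v w) :
    ‖u' - v'‖ ≤ (1 + β / ν) * ‖v' - v‖ := by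
  have h := norm_sub_le_div_mul_norm_of_linearization_step hν hβ hF hb hu'Y hu' hv hstep
  calc ‖u' - v'‖ = ‖(u' - v) - (v' - v)‖ := by rw [sub_sub_sub_cancel_right]
    _ ≤ ‖u' - v‖ + ‖v' - v‖ := norm_sub_le _ _
    _ ≤ (1 + β / ν) * ‖v' - v‖ := by linarith

end LinearizationStep

theorem le_one_sub_mul_inv_mul_of_abs_sub_le {x y C κ r : ℝ} (hC : 0 ≤ C) (hκC : κ * C < 1)
    (hr : r ≤ κ * x) (hxy : |x - y| ≤ C * r) :
    x ≤ (1 - κ * C)⁻¹ * y := by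
  rw [le_inv_mul_iff₀ (by linarith)]
  nlinarith [le_abs_self (x - y)]

theorem stmt_9_general
    {X : Type*} [NormedAddCommGroup X] [InnerProductSpace ℝ X]
    (F : X → X →L[ℝ] ℝ) (L ν : ℝ) (hν : 0 < ν)
    (hF2 : ∀ u v : X, ν * ‖u - v‖ ^ 2 ≤ F u (u - v) - F v (u - v))
    (a : X → X →ₗ[ℝ] X →ₗ[ℝ] ℝ) (β : ℝ) (hβ : 0 < β)
    (hbdd : ∀ u v w : X, a u v w ≤ β * ‖v‖ * ‖w‖)
    (Y : Submodule ℝ X)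
    (ustarY : X) (hustarY_mem : ustarY ∈ Y) (hustarY : ∀ v ∈ Y, F ustarY v = 0)
    (u : ℕ → X) (humem : ∀ n : ℕ, u n ∈ Y)
    (hiter : ∀ n : ℕ, ∀ w ∈ Y, a (u n) (u (n + 1)) w = a (u n) (u n) w - F (u n) w)
    (η : X → ℝ) (C₁ : ℝ) (hC₁ : 1 ≤ C₁)
    (hA1 : ∀ v ∈ Y, ∀ w ∈ Y, |η v - η w| ≤ C₁ * ‖v - w‖)
    (C₃ C₅ : ℝ) (hC₃ : C₃ = 1 + β / ν) (hC₅ : C₅ = C₃ * C₁)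
    (lam : ℝ) (hlam : 0 < lam) (hlam' : lam < 1 / C₅)
    (n : ℕ) (hn : 1 ≤ n)
    (hlin : ‖u n - u (n - 1)‖ ≤ lam * η (u n)) :
    ‖ustarY - u n‖ ≤ lam * C₃ * min (η (u n)) ((1 - lam * C₅)⁻¹ * η ustarY) := by
  obtain ⟨m, rfl⟩ := Nat.exists_eq_add_of_le' hn
  rw [Nat.add_sub_cancel] at hlin
  have hC₃pos : 0 < C₃ := hC₃ ▸ by positivity
  have hC₅pos : 0 < C₅ := one_div_pos.mp (hlam.trans hlam')
  have hlamC₅ : lam * C₃ * C₁ < 1 := by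
    rw [mul_assoc, ← hC₅]
    exact (lt_div_iff₀ hC₅pos).mp hlam'
  have hbound : ‖ustarY - u (m + 1)‖ ≤ lam * C₃ * η (u (m + 1)) :=
    calc ‖ustarY - u (m + 1)‖ ≤ C₃ * ‖u (m + 1) - u m‖ :=
          hC₃ ▸ norm_sub_le_one_add_div_mul_norm_of_linearization_step hν hβ.le hF2 (hbdd (u m))
            hustarY_mem hustarY (humem m) (hiter m)
      _ ≤ C₃ * (lam * η (u (m + 1))) := mul_le_mul_of_nonneg_left hlin hC₃pos.le
      _ = lam * C₃ * η (u (m + 1)) := by ring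
  have hη : η (u (m + 1)) ≤ (1 - lam * C₅)⁻¹ * η ustarY := by
    rw [hC₅, ← mul_assoc]
    refine le_one_sub_mul_inv_mul_of_abs_sub_le (by linarith) hlamC₅ hbound ?_
    rw [← norm_sub_rev]
    exact hA1 _ (humem _) _ hustarY_mem
  rw [min_eq_left hη]
  exact hbound

/-- If the linearization error is small, `‖uⁿ − uⁿ⁻¹‖ ≤ λ η(uⁿ)` with `0 < λ < 1/C₅`,
then `‖u*_Y − uⁿ‖ ≤ λ C₃ min{η(uⁿ), (1 − λC₅)⁻¹ η(u*_Y)}`. -/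
theorem stmt_9
    {X : Type*} [NormedAddCommGroup X] [InnerProductSpace ℝ X] [CompleteSpace X]
    (F : X → X →L[ℝ] ℝ) (L ν : ℝ) (hL : 0 < L) (hν : 0 < ν)
    (hF1 : ∀ u v w : X, |F u w - F v w| ≤ L * ‖u - v‖ * ‖w‖)
    (hF2 : ∀ u v : X, ν * ‖u - v‖ ^ 2 ≤ F u (u - v) - F v (u - v))
    (a : X → X →ₗ[ℝ] X →ₗ[ℝ] ℝ) (α β : ℝ) (hα : 0 < α) (hβ : 0 < β)
    (hcoer : ∀ u v : X, α * ‖v‖ ^ 2 ≤ a u v v)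
    (hbdd : ∀ u v w : X, a u v w ≤ β * ‖v‖ * ‖w‖)
    (Y : Submodule ℝ X) (hYclosed : IsClosed (Y : Set X))
    (ustarY : X) (hustarY_mem : ustarY ∈ Y) (hustarY : ∀ v ∈ Y, F ustarY v = 0)
    (u : ℕ → X) (humem : ∀ n : ℕ, u n ∈ Y)
    (hiter : ∀ n : ℕ, ∀ w ∈ Y, a (u n) (u (n + 1)) w = a (u n) (u n) w - F (u n) w)
    (η : X → ℝ) (C₁ : ℝ) (hC₁ : 1 ≤ C₁)
    (hηnonneg : ∀ v ∈ Y, 0 ≤ η v)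
    (hA1 : ∀ v ∈ Y, ∀ w ∈ Y, |η v - η w| ≤ C₁ * ‖v - w‖)
    (C₃ C₅ : ℝ) (hC₃ : C₃ = 1 + β / ν) (hC₅ : C₅ = C₃ * C₁)
    (lam : ℝ) (hlam : 0 < lam) (hlam' : lam < 1 / C₅)
    (n : ℕ) (hn : 1 ≤ n)
    (hlin : ‖u n - u (n - 1)‖ ≤ lam * η (u n)) :
    ‖ustarY - u n‖ ≤ lam * C₃ * min (η (u n)) ((1 - lam * C₅)⁻¹ * η ustarY) :=
  stmt_9_general F L ν hν hF2 a β hβ hbdd Y ustarY hustarY_mem hustarY u humem hiter η C₁ hC₁ hA1 C₃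
    C₅ hC₃ hC₅ lam hlam hlam' n hn hlin
end

section
/- Suppose F satisfies (F1)–(F2) and the estimator η satisfies (A1). Let (uⁿ)_{n≥0} ⊂ Y be the iterative linearization sequence restricted to Y, and suppose for some n ≥ 1 that ‖uⁿ − uⁿ⁻¹‖_X ≤ λ η(uⁿ) with 0 < λ < 1/C₅, where C₅ := C₃ C₁ and C₃ := 1 + β/ν. Then the estimators at uⁿ and at the discrete solution u*_Y are equivalent: (1 − λ C₅) η(uⁿ) ≤ η(u*_Y) ≤ (1 + λ C₅) η(uⁿ). -/
set_option autoImplicit false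

/-- If the linearization error is small, `‖uⁿ − uⁿ⁻¹‖ ≤ λ η(uⁿ)` with `0 < λ < 1/C₅`,
then the estimators are equivalent: `(1 − λC₅) η(uⁿ) ≤ η(u*_Y) ≤ (1 + λC₅) η(uⁿ)`. -/
theorem stmt_10
    {X : Type*} [NormedAddCommGroup X] [InnerProductSpace ℝ X] [CompleteSpace X]
    (F : X → X →L[ℝ] ℝ) (L ν : ℝ) (hL : 0 < L) (hν : 0 < ν)
    (hF1 : ∀ u v w : X, |F u w - F v w| ≤ L * ‖u - v‖ * ‖w‖)
    (hF2 : ∀ u v : X, ν * ‖u - v‖ ^ 2 ≤ F u (u - v) - F v (u - v))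
    (a : X → X →ₗ[ℝ] X →ₗ[ℝ] ℝ) (α β : ℝ) (hα : 0 < α) (hβ : 0 < β)
    (hcoer : ∀ u v : X, α * ‖v‖ ^ 2 ≤ a u v v)
    (hbdd : ∀ u v w : X, a u v w ≤ β * ‖v‖ * ‖w‖)
    (Y : Submodule ℝ X) (hYclosed : IsClosed (Y : Set X))
    (ustarY : X) (hustarY_mem : ustarY ∈ Y) (hustarY : ∀ v ∈ Y, F ustarY v = 0)
    (u : ℕ → X) (humem : ∀ n : ℕ, u n ∈ Y)
    (hiter : ∀ n : ℕ, ∀ w ∈ Y, a (u n) (u (n + 1)) w = a (u n) (u n) w - F (u n) w)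
    (η : X → ℝ) (C₁ : ℝ) (hC₁ : 1 ≤ C₁)
    (hηnonneg : ∀ v ∈ Y, 0 ≤ η v)
    (hA1 : ∀ v ∈ Y, ∀ w ∈ Y, |η v - η w| ≤ C₁ * ‖v - w‖)
    (C₃ C₅ : ℝ) (hC₃ : C₃ = 1 + β / ν) (hC₅ : C₅ = C₃ * C₁)
    (lam : ℝ) (hlam : 0 < lam) (hlam' : lam < 1 / C₅)
    (n : ℕ) (hn : 1 ≤ n)
    (hlin : ‖u n - u (n - 1)‖ ≤ lam * η (u n)) :
    (1 - lam * C₅) * η (u n) ≤ η ustarY ∧ η ustarY ≤ (1 + lam * C₅) * η (u n) := by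

  set m := n - 1 with hm
  have hmn : m + 1 = n := Nat.succ_pred_eq_of_pos hn
  set δ := ‖u n - u m‖ with hδ
  set d := ‖ustarY - u m‖ with hdd
  have hδ0 : 0 ≤ δ := norm_nonneg _
  have hd0 : 0 ≤ d := norm_nonneg _
  -- F (u m) w = a (u m) (u m - u n) w for w ∈ Y
  have hFval : ∀ w ∈ Y, F (u m) w = a (u m) (u m - u n) w := by
    intro w hw
    have := hiter m w hw
    rw [hmn] at this
    simp [map_sub, LinearMap.sub_apply]
    linarith [this]
  have hmemY : ustarY - u m ∈ Y := Y.sub_mem hustarY_mem (humem m)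
  have h2 : ν * d ^ 2 ≤ β * δ * d := by
    have hF2' := hF2 ustarY (u m)
    rw [hustarY _ hmemY, hFval _ hmemY] at hF2'
    have heq : a (u m) (u m - u n) (ustarY - u m)
        = - a (u m) (u n - u m) (ustarY - u m) := by
      have : (u m - u n : X) = -(u n - u m) := by abel
      rw [this]; simp
    have hb := hbdd (u m) (u n - u m) (ustarY - u m)
    have hnn : ‖u n - u m‖ = δ := by rw [hδ, norm_sub_rev]
    rw [hnn] at hb
    calc ν * d ^ 2 ≤ 0 - a (u m) (u m - u n) (ustarY - u m) := hF2'
      _ = a (u m) (u n - u m) (ustarY - u m) := by rw [heq]; ring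
      _ ≤ β * δ * d := hb
  have h3 : ν * d ≤ β * δ := by
    rcases eq_or_lt_of_le hd0 with h | h
    · have : 0 ≤ β * δ := mul_nonneg hβ.le hδ0
      nlinarith
    · nlinarith
  have hd_le : d ≤ (β / ν) * δ := by
    rw [div_mul_eq_mul_div, le_div_iff₀ hν]
    nlinarith
  have hkey : ‖u n - ustarY‖ ≤ C₃ * δ := by
    have htri : ‖u n - ustarY‖ ≤ δ + d := by
      calc ‖u n - ustarY‖ = ‖(u n - u m) + (u m - ustarY)‖ := by abel_nf
        _ ≤ ‖u n - u m‖ + ‖u m - ustarY‖ := norm_add_le _ _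
        _ = δ + d := by rw [norm_sub_rev (u m) ustarY]
    rw [hC₃]; nlinarith
  have hη0 : 0 ≤ η (u n) := hηnonneg _ (humem n)
  have habs : |η (u n) - η ustarY| ≤ lam * C₅ * η (u n) := by
    have h1 := hA1 (u n) (humem n) ustarY hustarY_mem
    have h2' : C₁ * ‖u n - ustarY‖ ≤ C₁ * (C₃ * δ) :=
      mul_le_mul_of_nonneg_left hkey (by linarith)
    have hC₃0 : 0 < C₃ := by rw [hC₃]; positivity
    have h3' : C₁ * (C₃ * δ) ≤ C₁ * (C₃ * (lam * η (u n))) := by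
      have := hlin
      have hC10 : (0:ℝ) ≤ C₁ := by linarith
      nlinarith [mul_le_mul_of_nonneg_left hlin (mul_nonneg hC10 hC₃0.le)]
    calc |η (u n) - η ustarY| ≤ C₁ * ‖u n - ustarY‖ := h1
      _ ≤ C₁ * (C₃ * (lam * η (u n))) := le_trans h2' h3'
      _ = lam * C₅ * η (u n) := by rw [hC₅]; ring
  rw [abs_le] at habs
  constructor <;> nlinarith [habs.1, habs.2]
end

section
/- Suppose (F1)–(F4) hold on the closed subspace X_N (i.e. F restricted to X_N satisfies (F1)–(F3), and the iterates on X_N satisfy (F4)), that a(·;·,·) is uniformly coercive and bounded, and that the estimator η_N satisfies (A1)–(A2). Let (u_N^n)_{n≥0} ⊂ X_N be the iterative linearization sequence on X_N, and suppose that ‖u_N^n − u_N^{n−1}‖_X > λ η_N(u_N^n) for all n ≥ 1 (i.e. the while loop of the adaptive algorithm never terminates on X_N), where λ > 0. Then u*_N = u*, and u_N^n → u* in X as n → ∞. -/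
/-!
The discrete solution `u*_N` minimises the potential `H` on `X_N`, because `F` is monotone and
vanishes at `u*_N` in every direction of `X_N`. Hence the energy decrease (F4) telescopes to a
summable series `∑ CH ‖u_N^{n+1} - u_N^n‖²`, and the increments tend to zero. Testing the
linearised step with `u_N^n - u*_N` and using strong monotonicity gives
`ν ‖u_N^n - u*_N‖ ≤ β ‖u_N^{n+1} - u_N^n‖`, so `u_N^n → u*_N`. Since the loop never stops,
`λ η_N(u_N^n)` is dominated by the increments and tends to zero, while (A1) makes
`η_N(u_N^n) → η_N(u*_N)`. Thus `η_N(u*_N) = 0`, and (A2) forces `u* = u*_N`.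
-/

open Filter Topology

theorem tendsto_zero_of_sq_le_sub_succ {c f : ℕ → ℝ} {CH m : ℝ} (hCH : 0 < CH)
    (hc : ∀ k, 0 ≤ c k) (hdec : ∀ k, CH * c k ^ 2 ≤ f k - f (k + 1)) (hf : ∀ k, m ≤ f k) :
    Tendsto c atTop (𝓝 0) := by
  have hsum : Summable fun k => CH * c k ^ 2 := by
    refine summable_of_sum_range_le (c := f 0 - m) (fun k => by positivity) fun n => ?_
    calc ∑ k ∈ Finset.range n, CH * c k ^ 2
        ≤ ∑ k ∈ Finset.range n, (f k - f (k + 1)) := Finset.sum_le_sum fun k _ => hdec k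
      _ = f 0 - f n := Finset.sum_range_sub' f n
      _ ≤ f 0 - m := by linarith [hf n]
  have hsq : Tendsto (fun k => c k ^ 2) atTop (𝓝 0) := by
    simpa [inv_mul_cancel_left₀ hCH.ne'] using hsum.tendsto_atTop_zero.const_mul CH⁻¹
  simpa only [Function.comp_def, Real.sqrt_sq (hc _), Real.sqrt_zero] using
    (Real.continuous_sqrt.tendsto 0).comp hsq

section Monotone

variable {X : Type*} [NormedAddCommGroup X] [NormedSpace ℝ X]

theorem potential_le_add_of_monotone (F : X → X →L[ℝ] ℝ) (H : X → ℝ)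
    (hH : ∀ v w : X, ∀ t : ℝ, HasDerivAt (fun s : ℝ => H (v + s • w)) (F (v + t • w) w) t)
    (hmono : ∀ u v : X, 0 ≤ F u (u - v) - F v (u - v))
    (x w : X) (hx : F x w = 0) : H x ≤ H (x + w) := by
  have hline : MonotoneOn (fun s : ℝ => H (x + s • w)) (Set.Icc 0 1) := by
    refine monotoneOn_of_deriv_nonneg (convex_Icc 0 1)
      (fun t _ => (hH x w t).continuousAt.continuousWithinAt)
      (fun t _ => (hH x w t).differentiableAt.differentiableWithinAt) fun t ht => ?_
    rw [interior_Icc] at ht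
    rw [(hH x w t).deriv]
    have h := hmono (x + t • w) x
    simp only [add_sub_cancel_left, map_smul, hx, smul_eq_mul, mul_zero, sub_zero] at h
    exact nonneg_of_mul_nonneg_right h ht.1
  simpa using hline (Set.left_mem_Icc.2 zero_le_one) (Set.right_mem_Icc.2 zero_le_one) zero_le_one

theorem norm_sub_le_of_linearization_step_s12 (F : X → X →L[ℝ] ℝ) (b : X →ₗ[ℝ] X →ₗ[ℝ] ℝ)
    {ν β : ℝ} (hν : 0 < ν) (hβ : 0 ≤ β) (hb : ∀ v w : X, b v w ≤ β * ‖v‖ * ‖w‖) {x y y' : X}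
    (hmono : ν * ‖y - x‖ ^ 2 ≤ F y (y - x) - F x (y - x)) (hx : F x (y - x) = 0)
    (hstep : b y' (y - x) = b y (y - x) - F y (y - x)) :
    ‖y - x‖ ≤ β / ν * ‖y' - y‖ := by
  have hFy : F y (y - x) = b (y - y') (y - x) := by
    rw [map_sub b y y', LinearMap.sub_apply]
    linarith
  have hkey : ν * ‖y - x‖ * ‖y - x‖ ≤ β * ‖y' - y‖ * ‖y - x‖ := by
    calc ν * ‖y - x‖ * ‖y - x‖ = ν * ‖y - x‖ ^ 2 := by ring
      _ ≤ b (y - y') (y - x) := by rw [← hFy, ← sub_zero (F y _), ← hx]; exact hmono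
      _ ≤ β * ‖y' - y‖ * ‖y - x‖ := by rw [← norm_neg, neg_sub]; exact hb _ _
  rcases (norm_nonneg (y - x)).eq_or_lt with h0 | h0
  · rw [← h0]
    positivity
  · rw [div_mul_eq_mul_div, le_div_iff₀ hν, mul_comm]
    exact le_of_mul_le_mul_right hkey h0

end Monotone

theorem tendsto_comp_of_abs_sub_le {X : Type*} [SeminormedAddCommGroup X] {η : X → ℝ}
    {s : Set X} {C : ℝ} (hη : ∀ v ∈ s, ∀ w ∈ s, |η v - η w| ≤ C * ‖v - w‖)
    {u : ℕ → X} {x : X} (hu : ∀ n, u n ∈ s) (hx : x ∈ s) (hlim : Tendsto u atTop (𝓝 x)) :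
    Tendsto (fun n => η (u n)) atTop (𝓝 (η x)) := by
  rw [tendsto_iff_norm_sub_tendsto_zero] at hlim ⊢
  simpa using squeeze_zero (fun n => norm_nonneg _)
    (fun n => (Real.norm_eq_abs _).trans_le (hη _ (hu n) _ hx)) (by simpa using hlim.const_mul C)

theorem stmt_12_general
    {X : Type*} [NormedAddCommGroup X] [InnerProductSpace ℝ X]
    (F : X → X →L[ℝ] ℝ) (L ν : ℝ) (hν : 0 < ν)
    (hF2 : ∀ u v : X, ν * ‖u - v‖ ^ 2 ≤ F u (u - v) - F v (u - v))
    (ustar : X)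
    (a : X → X →ₗ[ℝ] X →ₗ[ℝ] ℝ) (β : ℝ) (hβ : 0 < β)
    (hbdd : ∀ u v w : X, a u v w ≤ β * ‖v‖ * ‖w‖)
    (XN : Submodule ℝ X)
    (ustarN : X) (hustarN_mem : ustarN ∈ XN) (hustarN : ∀ v ∈ XN, F ustarN v = 0)
    (u : ℕ → X) (humem : ∀ n : ℕ, u n ∈ XN)
    (hiter : ∀ n : ℕ, ∀ w ∈ XN, a (u n) (u (n + 1)) w = a (u n) (u n) w - F (u n) w)
    (H : X → ℝ)
    (hF3 : ∀ v w : X, ∀ t : ℝ, HasDerivAt (fun s : ℝ => H (v + s • w)) (F (v + t • w) w) t)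
    (CH : ℝ) (hCH : 0 < CH)
    (hF4 : ∀ n : ℕ, 1 ≤ n → CH * ‖u n - u (n - 1)‖ ^ 2 ≤ H (u (n - 1)) - H (u n))
    (η : X → ℝ) (C₁ C₂ : ℝ)
    (hηnonneg : ∀ v ∈ XN, 0 ≤ η v)
    (hA1 : ∀ v ∈ XN, ∀ w ∈ XN, |η v - η w| ≤ C₁ * ‖v - w‖)
    (hA2 : ‖ustar - ustarN‖ ≤ C₂ * η ustarN)
    (lam : ℝ) (hlam : 0 < lam)
    (hloop : ∀ n : ℕ, 1 ≤ n → lam * η (u n) < ‖u n - u (n - 1)‖) :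
    ustarN = ustar ∧ Filter.Tendsto u Filter.atTop (nhds ustar) := by
  have hmem : ∀ n, u n - ustarN ∈ XN := fun n => XN.sub_mem (humem n) hustarN_mem
  have hH_ge : ∀ n, H ustarN ≤ H (u n) := fun n => by
    simpa using potential_le_add_of_monotone F H hF3
      (fun u v => (mul_nonneg hν.le (sq_nonneg _)).trans (hF2 u v)) ustarN _ (hustarN _ (hmem n))
  have hinc : Tendsto (fun n => ‖u (n + 1) - u n‖) atTop (𝓝 0) :=
    tendsto_zero_of_sq_le_sub_succ hCH (fun _ => norm_nonneg _)
      (fun n => by simpa using hF4 (n + 1) n.succ_pos) hH_ge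
  have hconv : Tendsto u atTop (𝓝 ustarN) := by
    rw [tendsto_iff_norm_sub_tendsto_zero]
    refine squeeze_zero (fun _ => norm_nonneg _) (fun n => ?_)
      (by simpa using hinc.const_mul (β / ν))
    exact norm_sub_le_of_linearization_step_s12 F (a (u n)) hν hβ.le (hbdd (u n)) (hF2 _ _)
      (hustarN _ (hmem n)) (hiter n _ (hmem n))
  have hη_le : η ustarN ≤ 0 := by
    refine le_of_tendsto_of_tendsto'
      (tendsto_comp_of_abs_sub_le hA1 humem hustarN_mem hconv |>.comp (tendsto_add_atTop_nat 1))
      (by simpa using hinc.const_mul lam⁻¹) fun n => ?_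
    rw [Function.comp_apply, le_inv_mul_iff₀ hlam]
    simpa using (hloop (n + 1) n.succ_pos).le
  have hη : η ustarN = 0 := le_antisymm hη_le (hηnonneg _ hustarN_mem)
  have heq : ustarN = ustar := by
    rw [hη, mul_zero, norm_le_zero_iff, sub_eq_zero] at hA2
    exact hA2.symm
  exact ⟨heq, heq ▸ hconv⟩

/-- If the while loop of the adaptive ILG algorithm never terminates on `X_N`
(i.e. `‖u_N^n − u_N^{n−1}‖ > λ η_N(u_N^n)` for all `n ≥ 1`), then under (F1)–(F4) on
`X_N` and (A1)–(A2) it holds that `u*_N = u*` and `u_N^n → u*` as `n → ∞`. -/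
theorem stmt_12
    {X : Type*} [NormedAddCommGroup X] [InnerProductSpace ℝ X] [CompleteSpace X]
    (F : X → X →L[ℝ] ℝ) (L ν : ℝ) (hL : 0 < L) (hν : 0 < ν)
    (hF1 : ∀ u v w : X, |F u w - F v w| ≤ L * ‖u - v‖ * ‖w‖)
    (hF2 : ∀ u v : X, ν * ‖u - v‖ ^ 2 ≤ F u (u - v) - F v (u - v))
    (ustar : X) (hustar : ∀ v : X, F ustar v = 0)
    (a : X → X →ₗ[ℝ] X →ₗ[ℝ] ℝ) (α β : ℝ) (hα : 0 < α) (hβ : 0 < β)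
    (hcoer : ∀ u v : X, α * ‖v‖ ^ 2 ≤ a u v v)
    (hbdd : ∀ u v w : X, a u v w ≤ β * ‖v‖ * ‖w‖)
    (XN : Submodule ℝ X) (hXNclosed : IsClosed (XN : Set X))
    (ustarN : X) (hustarN_mem : ustarN ∈ XN) (hustarN : ∀ v ∈ XN, F ustarN v = 0)
    (u : ℕ → X) (humem : ∀ n : ℕ, u n ∈ XN)
    (hiter : ∀ n : ℕ, ∀ w ∈ XN, a (u n) (u (n + 1)) w = a (u n) (u n) w - F (u n) w)
    (H : X → ℝ)
    (hF3 : ∀ v w : X, ∀ t : ℝ, HasDerivAt (fun s : ℝ => H (v + s • w)) (F (v + t • w) w) t)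
    (CH : ℝ) (hCH : 0 < CH)
    (hF4 : ∀ n : ℕ, 1 ≤ n → CH * ‖u n - u (n - 1)‖ ^ 2 ≤ H (u (n - 1)) - H (u n))
    (η : X → ℝ) (C₁ C₂ : ℝ) (hC₁ : 1 ≤ C₁) (hC₂ : 1 ≤ C₂)
    (hηnonneg : ∀ v ∈ XN, 0 ≤ η v)
    (hA1 : ∀ v ∈ XN, ∀ w ∈ XN, |η v - η w| ≤ C₁ * ‖v - w‖)
    (hA2 : ‖ustar - ustarN‖ ≤ C₂ * η ustarN)
    (lam : ℝ) (hlam : 0 < lam)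
    (hloop : ∀ n : ℕ, 1 ≤ n → lam * η (u n) < ‖u n - u (n - 1)‖) :
    ustarN = ustar ∧ Filter.Tendsto u Filter.atTop (nhds ustar) :=
  stmt_12_general F L ν hν hF2 ustar a β hβ hbdd XN ustarN hustarN_mem hustarN u humem hiter H hF3
    CH hCH hF4 η C₁ C₂ hηnonneg hA1 hA2 lam hlam hloop
end

section
/- Suppose F satisfies (F1)–(F2) and the estimator η_N satisfies (A1)–(A2). Let (u_N^n)_{n≥0} ⊂ X_N be the iterative linearization sequence on X_N, and suppose for some n ≥ 1 that ‖u_N^n − u_N^{n−1}‖_X ≤ λ η_N(u_N^n) with λ > 0 and that η_N(u_N^n) = 0. Then u_N^n = u*_N = u*, i.e. the iterate equals the exact solution of the nonlinear problem. -/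
set_option autoImplicit false

/-- If the while loop terminates with vanishing estimator, i.e.
`‖u_N^n − u_N^{n−1}‖ ≤ λ η_N(u_N^n)` and `η_N(u_N^n) = 0` for some `n ≥ 1`, then
`u_N^n = u*_N = u*`. -/
theorem stmt_13
    {X : Type*} [NormedAddCommGroup X] [InnerProductSpace ℝ X] [CompleteSpace X]
    (F : X → X →L[ℝ] ℝ) (L ν : ℝ) (hL : 0 < L) (hν : 0 < ν)
    (hF1 : ∀ u v w : X, |F u w - F v w| ≤ L * ‖u - v‖ * ‖w‖)
    (hF2 : ∀ u v : X, ν * ‖u - v‖ ^ 2 ≤ F u (u - v) - F v (u - v))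
    (ustar : X) (hustar : ∀ v : X, F ustar v = 0)
    (a : X → X →ₗ[ℝ] X →ₗ[ℝ] ℝ) (α β : ℝ) (hα : 0 < α) (hβ : 0 < β)
    (hcoer : ∀ u v : X, α * ‖v‖ ^ 2 ≤ a u v v)
    (hbdd : ∀ u v w : X, a u v w ≤ β * ‖v‖ * ‖w‖)
    (XN : Submodule ℝ X) (hXNclosed : IsClosed (XN : Set X))
    (ustarN : X) (hustarN_mem : ustarN ∈ XN) (hustarN : ∀ v ∈ XN, F ustarN v = 0)
    (u : ℕ → X) (humem : ∀ n : ℕ, u n ∈ XN)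
    (hiter : ∀ n : ℕ, ∀ w ∈ XN, a (u n) (u (n + 1)) w = a (u n) (u n) w - F (u n) w)
    (η : X → ℝ) (C₁ C₂ : ℝ) (hC₁ : 1 ≤ C₁) (hC₂ : 1 ≤ C₂)
    (hηnonneg : ∀ v ∈ XN, 0 ≤ η v)
    (hA1 : ∀ v ∈ XN, ∀ w ∈ XN, |η v - η w| ≤ C₁ * ‖v - w‖)
    (hA2 : ‖ustar - ustarN‖ ≤ C₂ * η ustarN)
    (lam : ℝ) (hlam : 0 < lam)
    (n : ℕ) (hn : 1 ≤ n)
    (hlin : ‖u n - u (n - 1)‖ ≤ lam * η (u n))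
    (hη0 : η (u n) = 0) :
    u n = ustarN ∧ u n = ustar := by
  -- Step 1: u n = u (n-1)
  have heq : u n = u (n - 1) := by
    have h0 : ‖u n - u (n - 1)‖ ≤ 0 := by
      rw [hη0] at hlin; simpa using hlin
    have := le_antisymm h0 (norm_nonneg _)
    rwa [norm_eq_zero, sub_eq_zero] at this
  -- Step 2: F (u n) vanishes on XN
  have hFn : ∀ w ∈ XN, F (u n) w = 0 := by
    intro w hw
    have hm : n - 1 + 1 = n := Nat.succ_pred_eq_of_pos hn
    have := hiter (n - 1) w hw
    rw [hm, ← heq] at this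
    linarith
  -- Step 3: u n = ustarN via strong monotonicity
  have h1 : u n = ustarN := by
    have hmem : u n - ustarN ∈ XN := XN.sub_mem (humem n) hustarN_mem
    have h2 := hF2 (u n) ustarN
    rw [hFn _ hmem, hustarN _ hmem] at h2
    have : ν * ‖u n - ustarN‖ ^ 2 ≤ 0 := by linarith
    have hs : ‖u n - ustarN‖ ^ 2 = 0 :=
      le_antisymm (by nlinarith [sq_nonneg ‖u n - ustarN‖]) (sq_nonneg _)
    have hz : ‖u n - ustarN‖ = 0 := by
      have := pow_eq_zero_iff (n := 2) (by norm_num) |>.mp hs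
      exact this
    rwa [norm_eq_zero, sub_eq_zero] at hz
  refine ⟨h1, ?_⟩
  have hη : η ustarN = 0 := by rw [← h1, hη0]
  have : ‖ustar - ustarN‖ ≤ 0 := by rw [hη] at hA2; simpa using hA2
  have := le_antisymm this (norm_nonneg _)
  rw [norm_eq_zero, sub_eq_zero] at this
  rw [h1, this]
end

section
/- Suppose F satisfies (F1)–(F2) and the estimator η_N satisfies (A1)–(A2). Let λ ∈ (0, 1/C₅) with C₅ := C₃ C₁ and C₃ := 1 + β/ν. Suppose u_N ∈ X_N and w_N ∈ X_N satisfy a(w_N; u_N, v) = a(w_N; w_N, v) − ⟨F(w_N), v⟩ for all v ∈ X_N and ‖u_N − w_N‖_X ≤ λ η_N(u_N). Then ‖u* − u_N‖_X ≤ C₆ η_N(u_N), where C₆ := λ C₃ + C₂(1 + λ C₅). -/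
set_option autoImplicit false

/-!
Testing strong monotonicity of `F` with `d = u*_N − w_N ∈ X_N` and using the discrete equation
`⟨F(u*_N), d⟩ = 0` together with the linearized step gives
`ν ‖d‖² ≤ −⟨F(w_N), d⟩ = a(w_N; u_N − w_N, d) ≤ β ‖u_N − w_N‖ ‖d‖`, hence
`‖u*_N − u_N‖ ≤ C₃ ‖u_N − w_N‖ ≤ λ C₃ η_N(u_N)`. Reliability (A2) at `u*_N` and stability (A1)
of the estimator then transfer the bound from `u*_N` to `u_N`.
-/

theorem norm_sub_le_of_linearized_step
    {X : Type*} [SeminormedAddCommGroup X] [NormedSpace ℝ X]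
    (F : X → X →L[ℝ] ℝ) {ν β : ℝ} (hν : 0 < ν) (hβ : 0 ≤ β)
    (hF2 : ∀ u v : X, ν * ‖u - v‖ ^ 2 ≤ F u (u - v) - F v (u - v))
    (b : X →ₗ[ℝ] X →ₗ[ℝ] ℝ) (hb : ∀ v w : X, b v w ≤ β * ‖v‖ * ‖w‖)
    (XN : Submodule ℝ X) {ustarN wN uN : X} (hustarN_mem : ustarN ∈ XN) (hwmem : wN ∈ XN)
    (hustarN : ∀ v ∈ XN, F ustarN v = 0) (hstep : ∀ v ∈ XN, b uN v = b wN v - F wN v) :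
    ‖ustarN - uN‖ ≤ (1 + β / ν) * ‖uN - wN‖ := by
  set d := ustarN - wN with hd_def
  have hd : d ∈ XN := XN.sub_mem hustarN_mem hwmem
  have hresidual : -F wN d = b (uN - wN) d := by
    rw [LinearMap.map_sub₂, hstep d hd]
    ring
  have henergy : ν * ‖d‖ ^ 2 ≤ β * ‖uN - wN‖ * ‖d‖ :=
    calc ν * ‖d‖ ^ 2 ≤ F ustarN d - F wN d := hF2 ustarN wN
      _ = b (uN - wN) d := by rw [hustarN d hd, zero_sub, hresidual]
      _ ≤ β * ‖uN - wN‖ * ‖d‖ := hb _ _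
  have hd_le : ‖d‖ ≤ β / ν * ‖uN - wN‖ := by
    rw [div_mul_eq_mul_div, le_div_iff₀ hν]
    nlinarith [norm_nonneg d, norm_nonneg (uN - wN), mul_nonneg hβ (norm_nonneg (uN - wN))]
  calc ‖ustarN - uN‖ = ‖d - (uN - wN)‖ := by rw [hd_def, sub_sub_sub_cancel_right]
    _ ≤ ‖d‖ + ‖uN - wN‖ := norm_sub_le _ _
    _ ≤ (1 + β / ν) * ‖uN - wN‖ := by linarith

theorem norm_sub_le_of_reliable_of_stable {X : Type*} [SeminormedAddCommGroup X]
    (η : X → ℝ) {C₁ C₂ : ℝ} (hC₂ : 0 ≤ C₂) {ustar ustarN uN : X}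
    (hA1 : |η ustarN - η uN| ≤ C₁ * ‖ustarN - uN‖) (hA2 : ‖ustar - ustarN‖ ≤ C₂ * η ustarN) :
    ‖ustar - uN‖ ≤ (1 + C₂ * C₁) * ‖ustarN - uN‖ + C₂ * η uN := by
  have hη : η ustarN ≤ η uN + C₁ * ‖ustarN - uN‖ := by linarith [(abs_le.mp hA1).2]
  calc ‖ustar - uN‖ ≤ ‖ustar - ustarN‖ + ‖ustarN - uN‖ := norm_sub_le_norm_sub_add_norm_sub _ _ _
    _ ≤ C₂ * (η uN + C₁ * ‖ustarN - uN‖) + ‖ustarN - uN‖ := by gcongr; exact hA2.trans (by gcongr)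
    _ = (1 + C₂ * C₁) * ‖ustarN - uN‖ + C₂ * η uN := by ring

theorem stmt_15_general
    {X : Type*} [NormedAddCommGroup X] [InnerProductSpace ℝ X]
    (F : X → X →L[ℝ] ℝ) (L ν : ℝ) (hν : 0 < ν)
    (hF2 : ∀ u v : X, ν * ‖u - v‖ ^ 2 ≤ F u (u - v) - F v (u - v))
    (ustar : X)
    (a : X → X →ₗ[ℝ] X →ₗ[ℝ] ℝ) (β : ℝ) (hβ : 0 < β)
    (hbdd : ∀ u v w : X, a u v w ≤ β * ‖v‖ * ‖w‖)
    (XN : Submodule ℝ X)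
    (ustarN : X) (hustarN_mem : ustarN ∈ XN) (hustarN : ∀ v ∈ XN, F ustarN v = 0)
    (η : X → ℝ) (C₁ C₂ : ℝ) (hC₁ : 1 ≤ C₁) (hC₂ : 1 ≤ C₂)
    (hA1 : ∀ v ∈ XN, ∀ w ∈ XN, |η v - η w| ≤ C₁ * ‖v - w‖)
    (hA2 : ‖ustar - ustarN‖ ≤ C₂ * η ustarN)
    (lam : ℝ)
    (C₃ C₅ C₆ : ℝ) (hC₃ : C₃ = 1 + β / ν) (hC₅ : C₅ = C₃ * C₁)
    (hC₆ : C₆ = lam * C₃ + C₂ * (1 + lam * C₅))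
    (wN uN : X) (hwmem : wN ∈ XN) (humem : uN ∈ XN)
    (hstep : ∀ v ∈ XN, a wN uN v = a wN wN v - F wN v)
    (hstop : ‖uN - wN‖ ≤ lam * η uN) :
    ‖ustar - uN‖ ≤ C₆ * η uN := by
  have hC₃_nonneg : 0 ≤ C₃ := hC₃ ▸ by positivity
  have hdiscrete : ‖ustarN - uN‖ ≤ C₃ * (lam * η uN) :=
    (hC₃ ▸ norm_sub_le_of_linearized_step F hν hβ.le hF2 (a wN) (hbdd wN) XN hustarN_mem hwmem
      hustarN hstep).trans (by gcongr)
  calc ‖ustar - uN‖ ≤ (1 + C₂ * C₁) * ‖ustarN - uN‖ + C₂ * η uN :=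
        norm_sub_le_of_reliable_of_stable η (by linarith)
          (hA1 ustarN hustarN_mem uN humem) hA2
    _ ≤ (1 + C₂ * C₁) * (C₃ * (lam * η uN)) + C₂ * η uN := by
        gcongr
    _ = C₆ * η uN := by rw [hC₆, hC₅]; ring

/-- A posteriori bound for the output of the adaptive algorithm on a single space:
if `u_N` is one linearization step from `w_N` and `‖u_N − w_N‖ ≤ λ η_N(u_N)` with
`λ ∈ (0, 1/C₅)`, then `‖u* − u_N‖ ≤ C₆ η_N(u_N)` where `C₆ = λC₃ + C₂(1 + λC₅)`. -/
theorem stmt_15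
    {X : Type*} [NormedAddCommGroup X] [InnerProductSpace ℝ X] [CompleteSpace X]
    (F : X → X →L[ℝ] ℝ) (L ν : ℝ) (hL : 0 < L) (hν : 0 < ν)
    (hF1 : ∀ u v w : X, |F u w - F v w| ≤ L * ‖u - v‖ * ‖w‖)
    (hF2 : ∀ u v : X, ν * ‖u - v‖ ^ 2 ≤ F u (u - v) - F v (u - v))
    (ustar : X) (hustar : ∀ v : X, F ustar v = 0)
    (a : X → X →ₗ[ℝ] X →ₗ[ℝ] ℝ) (α β : ℝ) (hα : 0 < α) (hβ : 0 < β)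
    (hcoer : ∀ u v : X, α * ‖v‖ ^ 2 ≤ a u v v)
    (hbdd : ∀ u v w : X, a u v w ≤ β * ‖v‖ * ‖w‖)
    (XN : Submodule ℝ X) (hXNclosed : IsClosed (XN : Set X))
    (ustarN : X) (hustarN_mem : ustarN ∈ XN) (hustarN : ∀ v ∈ XN, F ustarN v = 0)
    (η : X → ℝ) (C₁ C₂ : ℝ) (hC₁ : 1 ≤ C₁) (hC₂ : 1 ≤ C₂)
    (hηnonneg : ∀ v ∈ XN, 0 ≤ η v)
    (hA1 : ∀ v ∈ XN, ∀ w ∈ XN, |η v - η w| ≤ C₁ * ‖v - w‖)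
    (hA2 : ‖ustar - ustarN‖ ≤ C₂ * η ustarN)
    (lam : ℝ) (hlam : 0 < lam)
    (C₃ C₅ C₆ : ℝ) (hC₃ : C₃ = 1 + β / ν) (hC₅ : C₅ = C₃ * C₁)
    (hC₆ : C₆ = lam * C₃ + C₂ * (1 + lam * C₅))
    (hlam' : lam < 1 / C₅)
    (wN uN : X) (hwmem : wN ∈ XN) (humem : uN ∈ XN)
    (hstep : ∀ v ∈ XN, a wN uN v = a wN wN v - F wN v)
    (hstop : ‖uN - wN‖ ≤ lam * η uN) :
    ‖ustar - uN‖ ≤ C₆ * η uN :=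
  stmt_15_general F L ν hν hF2 ustar a β hβ hbdd XN ustarN hustarN_mem hustarN η C₁ C₂ hC₁ hC₂ hA1
    hA2 lam C₃ C₅ C₆ hC₃ hC₅ hC₆ wN uN hwmem humem hstep hstop
end

section
/- Suppose F satisfies (F1)–(F3), each estimator η_N satisfies (A1)–(A2), and the perturbed contraction property holds: there are constants 0 < q < 1 and C₇ > 0 with η_{N+1}(u*_{N+1})² ≤ q η_N(u*_N)² + C₇ ‖u*_{N+1} − u*_N‖_X² for all N ≥ 0. Set γ := ν/(2C₇), Δ_N := H(u*_N) − H(u*) + γ η_N(u*_N)², and q_Δ := (L C₂² + 2γq)/(L C₂² + 2γ). Then q < q_Δ < 1 and Δ_{N+1} ≤ q_Δ Δ_N for all N ≥ 0; in particular Δ_{N+K} ≤ q_Δ^K Δ_N for all N, K ≥ 0. -/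
set_option autoImplicit false

/-!
Along the segment from `v` to `u`, the potential minus its linearisation at `v` has derivative
`F (v + s • w) w - F v w` (with `w = u - v`), which by (F2) and (F1) lies between `ν s ‖w‖²` and
`L s ‖w‖²`; integrating gives `ν/2 ‖u - v‖² ≤ H u - H v - F v (u - v) ≤ L/2 ‖u - v‖²`.
Galerkin orthogonality kills the linear term, so the energy drops by at least `ν/2 ‖u*_{N+1} - u*_N‖²`
from one level to the next, which absorbs the perturbation `γ C₇ ‖u*_{N+1} - u*_N‖²` of the
estimator contraction. The energy error is at most `L C₂²/2 η_N(u*_N)²` by (A2), and trading part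
of `H(u*_N) - H(u*)` against `γ η_N(u*_N)²` at this ratio yields the factor `q_Δ`.
-/

open Set

theorem half_mul_le_sub_of_mul_le_deriv {g g' : ℝ → ℝ} {a : ℝ}
    (hg : ∀ s, HasDerivAt g (g' s) s) (h : ∀ s ∈ Ioo (0 : ℝ) 1, a * s ≤ g' s) :
    a / 2 ≤ g 1 - g 0 := by
  have hφ : ∀ s, HasDerivAt (fun s => g s - a / 2 * s ^ 2) (g' s - a * s) s := fun s =>
    ((hg s).sub ((hasDerivAt_pow 2 s).const_mul (a / 2))).congr_deriv (by norm_num; ring)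
  have hmono : MonotoneOn (fun s => g s - a / 2 * s ^ 2) (Icc 0 1) :=
    monotoneOn_of_hasDerivWithinAt_nonneg (convex_Icc 0 1)
      (fun s _ => (hφ s).continuousAt.continuousWithinAt)
      (fun s _ => (hφ s).hasDerivWithinAt)
      (fun s hs => sub_nonneg.2 (h s (by rwa [interior_Icc] at hs)))
  have := hmono (left_mem_Icc.2 zero_le_one) (right_mem_Icc.2 zero_le_one) zero_le_one
  simp only at this
  linarith

theorem sub_le_half_mul_of_deriv_le_mul {g g' : ℝ → ℝ} {a : ℝ}
    (hg : ∀ s, HasDerivAt g (g' s) s) (h : ∀ s ∈ Ioo (0 : ℝ) 1, g' s ≤ a * s) :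
    g 1 - g 0 ≤ a / 2 := by
  have := half_mul_le_sub_of_mul_le_deriv (fun s => (hg s).neg) (a := -a)
    fun s hs => by linarith [h s hs]
  simp only [Pi.neg_apply] at this
  linarith

section Potential

variable {X : Type*} [NormedAddCommGroup X] [NormedSpace ℝ X] {F : X → X →L[ℝ] ℝ} {H : X → ℝ}

theorem hasDerivAt_potential_sub_linear
    (hF3 : ∀ v w : X, ∀ t : ℝ, HasDerivAt (fun s : ℝ => H (v + s • w)) (F (v + t • w) w) t)
    (v w : X) (s : ℝ) :
    HasDerivAt (fun s : ℝ => H (v + s • w) - s * F v w) (F (v + s • w) w - F v w) s :=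
  (hF3 v w s).sub (hasDerivAt_mul_const _)

theorem half_mul_sq_le_potential_sub {ν : ℝ}
    (hF2 : ∀ u v : X, ν * ‖u - v‖ ^ 2 ≤ F u (u - v) - F v (u - v))
    (hF3 : ∀ v w : X, ∀ t : ℝ, HasDerivAt (fun s : ℝ => H (v + s • w)) (F (v + t • w) w) t)
    (u v : X) :
    ν / 2 * ‖u - v‖ ^ 2 ≤ H u - H v - F v (u - v) := by
  have := half_mul_le_sub_of_mul_le_deriv (hasDerivAt_potential_sub_linear hF3 v (u - v))
    (a := ν * ‖u - v‖ ^ 2) fun s ⟨hs, _⟩ => by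
      have h := hF2 (v + s • (u - v)) v
      rw [add_sub_cancel_left, norm_smul, Real.norm_of_nonneg hs.le, map_smul, map_smul,
        smul_eq_mul, smul_eq_mul] at h
      nlinarith
  simp only [zero_smul, one_smul, add_zero, add_sub_cancel, zero_mul, one_mul, sub_zero] at this
  linarith

theorem potential_sub_le_half_mul_sq {L : ℝ}
    (hF1 : ∀ u v w : X, |F u w - F v w| ≤ L * ‖u - v‖ * ‖w‖)
    (hF3 : ∀ v w : X, ∀ t : ℝ, HasDerivAt (fun s : ℝ => H (v + s • w)) (F (v + t • w) w) t)
    (u v : X) :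
    H u - H v - F v (u - v) ≤ L / 2 * ‖u - v‖ ^ 2 := by
  have := sub_le_half_mul_of_deriv_le_mul (hasDerivAt_potential_sub_linear hF3 v (u - v))
    (a := L * ‖u - v‖ ^ 2) fun s ⟨hs, _⟩ => by
      have h := (abs_le.1 (hF1 (v + s • (u - v)) v (u - v))).2
      rw [add_sub_cancel_left, norm_smul, Real.norm_of_nonneg hs.le] at h
      linarith
  simp only [zero_smul, one_smul, add_zero, add_sub_cancel, zero_mul, one_mul, sub_zero] at this
  linarith

end Potential

section Contraction

-- The factor `q_Δ`, with `A = L C₂²`.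
noncomputable def contractionFactor (A γ q : ℝ) : ℝ := (A + 2 * γ * q) / (A + 2 * γ)

variable {A γ q : ℝ}

theorem lt_contractionFactor (hA : 0 < A) (hγ : 0 < γ) (hq : q < 1) :
    q < contractionFactor A γ q := by
  rw [contractionFactor, lt_div_iff₀ (by positivity)]
  nlinarith

theorem contractionFactor_lt_one (hA : 0 < A) (hγ : 0 < γ) (hq : q < 1) :
    contractionFactor A γ q < 1 := by
  rw [contractionFactor, div_lt_one (by positivity)]
  nlinarith

theorem add_le_contractionFactor_mul {ν C E E' e e' d : ℝ} (hA : 0 < A) (hγ : 0 < γ)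
    (hq : q < 1) (hγC : γ * C = ν / 2) (hE' : E' ≤ E - ν / 2 * d) (he' : e' ≤ q * e + C * d)
    (hE : E ≤ A / 2 * e) :
    E' + γ * e' ≤ contractionFactor A γ q * (E + γ * e) := by
  have hdecay : E' + γ * e' ≤ E + γ * q * e := by
    have := mul_le_mul_of_nonneg_left he' hγ.le
    have := congrArg (· * d) hγC
    nlinarith
  have htrade : E + γ * q * e ≤ contractionFactor A γ q * (E + γ * e) := by
    rw [contractionFactor, div_mul_eq_mul_div, le_div_iff₀ (by positivity)]
    nlinarith [mul_le_mul_of_nonneg_left hE (by nlinarith : (0 : ℝ) ≤ 2 * γ * (1 - q))]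
  exact hdecay.trans htrade

end Contraction

theorem stmt_17_general
    {X : Type*} [NormedAddCommGroup X] [InnerProductSpace ℝ X]
    (F : X → X →L[ℝ] ℝ) (L ν : ℝ) (hL : 0 < L) (hν : 0 < ν)
    (hF1 : ∀ u v w : X, |F u w - F v w| ≤ L * ‖u - v‖ * ‖w‖)
    (hF2 : ∀ u v : X, ν * ‖u - v‖ ^ 2 ≤ F u (u - v) - F v (u - v))
    (ustar : X) (hustar : ∀ v : X, F ustar v = 0)
    (H : X → ℝ)
    (hF3 : ∀ v w : X, ∀ t : ℝ, HasDerivAt (fun s : ℝ => H (v + s • w)) (F (v + t • w) w) t)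
    (XN : ℕ → Submodule ℝ X)
    (hnested : ∀ N : ℕ, XN N ≤ XN (N + 1))
    (ustarN : ℕ → X) (hustarN_mem : ∀ N : ℕ, ustarN N ∈ XN N)
    (hustarN : ∀ N : ℕ, ∀ v ∈ XN N, F (ustarN N) v = 0)
    (η : ℕ → X → ℝ) (C₂ : ℝ) (hC₂ : 1 ≤ C₂)
    (hA2 : ∀ N : ℕ, ‖ustar - ustarN N‖ ≤ C₂ * η N (ustarN N))
    (q C₇ : ℝ) (hq0 : 0 < q) (hq1 : q < 1) (hC₇ : 0 < C₇)
    (hperturb : ∀ N : ℕ,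
      η (N + 1) (ustarN (N + 1)) ^ 2 ≤
        q * η N (ustarN N) ^ 2 + C₇ * ‖ustarN (N + 1) - ustarN N‖ ^ 2)
    (γ : ℝ) (hγ : γ = ν / (2 * C₇))
    (Δ : ℕ → ℝ) (hΔ : ∀ N : ℕ, Δ N = H (ustarN N) - H ustar + γ * η N (ustarN N) ^ 2)
    (qΔ : ℝ) (hqΔ : qΔ = (L * C₂ ^ 2 + 2 * γ * q) / (L * C₂ ^ 2 + 2 * γ)) :
    q < qΔ ∧ qΔ < 1 ∧ (∀ N : ℕ, Δ (N + 1) ≤ qΔ * Δ N) ∧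
      ∀ N K : ℕ, Δ (N + K) ≤ qΔ ^ K * Δ N := by
  have hA : 0 < L * C₂ ^ 2 := by positivity
  have hγ0 : 0 < γ := by rw [hγ]; positivity
  replace hqΔ : qΔ = contractionFactor (L * C₂ ^ 2) γ q := hqΔ
  have hq_lt : q < qΔ := hqΔ ▸ lt_contractionFactor hA hγ0 hq1
  have hstep : ∀ N, Δ (N + 1) ≤ qΔ * Δ N := fun N => by
    have hgalerkin : F (ustarN (N + 1)) (ustarN N - ustarN (N + 1)) = 0 :=
      hustarN (N + 1) _ (sub_mem (hnested N (hustarN_mem N)) (hustarN_mem (N + 1)))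
    have hdecay := half_mul_sq_le_potential_sub hF2 hF3 (ustarN N) (ustarN (N + 1))
    have henergy := potential_sub_le_half_mul_sq hF1 hF3 (ustarN N) ustar
    have hreliable : ‖ustarN N - ustar‖ ^ 2 ≤ C₂ ^ 2 * η N (ustarN N) ^ 2 := by
      rw [← mul_pow, norm_sub_rev]
      exact pow_le_pow_left₀ (norm_nonneg _) (hA2 N) 2
    rw [hgalerkin, sub_zero] at hdecay
    rw [hustar, sub_zero] at henergy
    rw [hΔ, hΔ, hqΔ]
    refine add_le_contractionFactor_mul hA hγ0 hq1 (by rw [hγ]; field_simp) (by linarith)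
      (norm_sub_rev (ustarN (N + 1)) (ustarN N) ▸ hperturb N) ?_
    nlinarith
  refine ⟨hq_lt, hqΔ ▸ contractionFactor_lt_one hA hγ0 hq1, hstep, fun N K => ?_⟩
  exact le_geom (u := fun k => Δ (N + k)) (hq0.trans hq_lt).le K fun k _ => hstep (N + k)

/-- Linear contraction of the quantity `Δ_N = H(u*_N) − H(u*) + γ η_N(u*_N)²`:
under (F1)–(F3), (A1)–(A2) and the perturbed contraction property,
`q < q_Δ < 1` and `Δ_{N+1} ≤ q_Δ Δ_N` for all `N`, hence `Δ_{N+K} ≤ q_Δ^K Δ_N`. -/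
theorem stmt_17
    {X : Type*} [NormedAddCommGroup X] [InnerProductSpace ℝ X] [CompleteSpace X]
    (F : X → X →L[ℝ] ℝ) (L ν : ℝ) (hL : 0 < L) (hν : 0 < ν)
    (hF1 : ∀ u v w : X, |F u w - F v w| ≤ L * ‖u - v‖ * ‖w‖)
    (hF2 : ∀ u v : X, ν * ‖u - v‖ ^ 2 ≤ F u (u - v) - F v (u - v))
    (ustar : X) (hustar : ∀ v : X, F ustar v = 0)
    (H : X → ℝ)
    (hF3 : ∀ v w : X, ∀ t : ℝ, HasDerivAt (fun s : ℝ => H (v + s • w)) (F (v + t • w) w) t)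
    (XN : ℕ → Submodule ℝ X) (hclosed : ∀ N : ℕ, IsClosed (XN N : Set X))
    (hnested : ∀ N : ℕ, XN N ≤ XN (N + 1))
    (ustarN : ℕ → X) (hustarN_mem : ∀ N : ℕ, ustarN N ∈ XN N)
    (hustarN : ∀ N : ℕ, ∀ v ∈ XN N, F (ustarN N) v = 0)
    (η : ℕ → X → ℝ) (C₁ C₂ : ℝ) (hC₁ : 1 ≤ C₁) (hC₂ : 1 ≤ C₂)
    (hηnonneg : ∀ N : ℕ, ∀ v ∈ XN N, 0 ≤ η N v)
    (hA1 : ∀ N : ℕ, ∀ v ∈ XN N, ∀ w ∈ XN N, |η N v - η N w| ≤ C₁ * ‖v - w‖)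
    (hA2 : ∀ N : ℕ, ‖ustar - ustarN N‖ ≤ C₂ * η N (ustarN N))
    (q C₇ : ℝ) (hq0 : 0 < q) (hq1 : q < 1) (hC₇ : 0 < C₇)
    (hperturb : ∀ N : ℕ,
      η (N + 1) (ustarN (N + 1)) ^ 2 ≤
        q * η N (ustarN N) ^ 2 + C₇ * ‖ustarN (N + 1) - ustarN N‖ ^ 2)
    (γ : ℝ) (hγ : γ = ν / (2 * C₇))
    (Δ : ℕ → ℝ) (hΔ : ∀ N : ℕ, Δ N = H (ustarN N) - H ustar + γ * η N (ustarN N) ^ 2)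
    (qΔ : ℝ) (hqΔ : qΔ = (L * C₂ ^ 2 + 2 * γ * q) / (L * C₂ ^ 2 + 2 * γ)) :
    q < qΔ ∧ qΔ < 1 ∧ (∀ N : ℕ, Δ (N + 1) ≤ qΔ * Δ N) ∧
      ∀ N K : ℕ, Δ (N + K) ≤ qΔ ^ K * Δ N :=
  stmt_17_general F L ν hL hν hF1 hF2 ustar hustar H hF3 XN hnested ustarN hustarN_mem hustarN η C₂
    hC₂ hA2 q C₇ hq0 hq1 hC₇ hperturb γ hγ Δ hΔ qΔ hqΔ
end

section
/- Suppose F satisfies (F1)–(F3), the estimators satisfy (A1)–(A2), and λ ∈ (0, 1/C₅) with C₅ := C₃ C₁ and C₃ := 1 + β/ν. Let N ≥ 1, let u_{N−1} ∈ X_{N−1} satisfy ‖u* − u_{N−1}‖_X ≤ C₆ η_{N−1}(u_{N−1}) with C₆ := λ C₃ + C₂(1 + λ C₅) and η_{N−1}(u_{N−1}) > 0, and let (u_N^n)_{n≥0} ⊂ X_N be the iterative linearization sequence on X_N with initial guess u_N^0 = u_{N−1}, satisfying (F4) on X_N with constant C_H > 0. Set C₄ := L C₃²/(2 C_H), C :=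 L^{1/2} C₄^{1/2} C₆ / (√2 C_H^{1/2}), and C′ := C C₁ C₄^{1/2} / (1 − (1 + C₄⁻¹)^{−1/2}). If k ≥ 1 is the minimal index with ‖u_N^k − u_N^{k−1}‖_X ≤ λ η_N(u_N^k) and η_N(u_N^k) > 0, then k ≤ (2 / log(1 + C₄⁻¹)) · log( (C λ⁻¹ + C′)(1 + C₄⁻¹) · max{1, η_{N−1}(u_{N−1}) / η_N(u_N^k)} ) + 1. -/
/-!
Along the iterates on `X_N` consider the energy `E n = H(u_N^n) − H(u*_N)`, nonnegative because
`u*_N` minimises the potential `H` on `X_N`. The linearized equation together with strong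
monotonicity gives `‖u_N^{n+1} − u*_N‖ ≤ C₃ ‖u_N^{n+1} − u_N^n‖`, so the upper Taylor bound for `H`
and (F4) yield `E (n+1) ≤ C₄ (E n − E (n+1))`: the energy contracts by the factor
`(1 + C₄⁻¹)⁻¹`, and the increments `‖u_N^{n+1} − u_N^n‖` decay like `(1 + C₄⁻¹)^(-n/2)`, starting
from `E 0 ≤ H(u_{N−1}) − H(u*) ≤ (L/2) (C₆ η_{N−1}(u_{N−1}))²`. At step `k − 1` the stopping
criterion still fails, so `λ η_N(u_N^{k−1})` is below the previous increment, and (A1) passes this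
on to `η_N(u_N^k) > 0`; comparing the two sides bounds `(1 + C₄⁻¹)^((k−1)/2)`.
-/

open Real Set

lemma image_sub_ge_of_deriv_sub_ge {φ φ' : ℝ → ℝ} {c : ℝ} (hφ : ∀ t, HasDerivAt φ (φ' t) t)
    (h : ∀ t ∈ Ioo (0 : ℝ) 1, c * t ≤ φ' t - φ' 0) : φ' 0 + c / 2 ≤ φ 1 - φ 0 := by
  let ψ : ℝ → ℝ := fun t => φ t - φ' 0 * t - c / 2 * t ^ 2
  have hψ : ∀ t, HasDerivAt ψ (φ' t - φ' 0 - c * t) t := fun t => by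
    have := ((hφ t).sub ((hasDerivAt_id' t).const_mul (φ' 0))).sub
      ((hasDerivAt_pow 2 t).const_mul (c / 2))
    exact this.congr_deriv (by norm_num; ring)
  have hmono : MonotoneOn ψ (Icc 0 1) :=
    monotoneOn_of_deriv_nonneg (convex_Icc 0 1)
      (fun t _ => (hψ t).continuousAt.continuousWithinAt)
      (fun t _ => (hψ t).differentiableAt.differentiableWithinAt)
      (fun t ht => by
        rw [interior_Icc] at ht
        rw [(hψ t).deriv]
        linarith [h t ht])
  have h01 := hmono (left_mem_Icc.2 zero_le_one) (right_mem_Icc.2 zero_le_one) zero_le_one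
  simp only [ψ] at h01
  linarith

lemma image_sub_le_of_deriv_sub_le {φ φ' : ℝ → ℝ} {c : ℝ} (hφ : ∀ t, HasDerivAt φ (φ' t) t)
    (h : ∀ t ∈ Ioo (0 : ℝ) 1, φ' t - φ' 0 ≤ c * t) : φ 1 - φ 0 ≤ φ' 0 + c / 2 := by
  have := image_sub_ge_of_deriv_sub_ge (φ := -φ) (φ' := -φ') (c := -c) (fun t => (hφ t).neg)
    (fun t ht => by simp only [Pi.neg_apply]; linarith [h t ht])
  simp only [Pi.neg_apply] at this
  linarith

section Potential

variable {X : Type*} [NormedAddCommGroup X] [NormedSpace ℝ X] {F : X → X →L[ℝ] ℝ} {H : X → ℝ}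

lemma potential_sub_ge {ν : ℝ} (hF2 : ∀ u v : X, ν * ‖u - v‖ ^ 2 ≤ F u (u - v) - F v (u - v))
    (hF3 : ∀ v w : X, ∀ t : ℝ, HasDerivAt (fun s : ℝ => H (v + s • w)) (F (v + t • w) w) t)
    (v w : X) : F v w + ν / 2 * ‖w‖ ^ 2 ≤ H (v + w) - H v := by
  have key := image_sub_ge_of_deriv_sub_ge (c := ν * ‖w‖ ^ 2) (hF3 v w) fun t ht => by
    have h := hF2 (v + t • w) v
    rw [add_sub_cancel_left, map_smul, map_smul, norm_smul, norm_of_nonneg ht.1.le,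
      smul_eq_mul, smul_eq_mul] at h
    rw [zero_smul, add_zero]
    exact le_of_mul_le_mul_left (by linarith) ht.1
  simp only [zero_smul, one_smul, add_zero] at key
  linarith

lemma potential_sub_le {L : ℝ} (hF1 : ∀ u v w : X, |F u w - F v w| ≤ L * ‖u - v‖ * ‖w‖)
    (hF3 : ∀ v w : X, ∀ t : ℝ, HasDerivAt (fun s : ℝ => H (v + s • w)) (F (v + t • w) w) t)
    (v w : X) : H (v + w) - H v ≤ F v w + L / 2 * ‖w‖ ^ 2 := by
  have key := image_sub_le_of_deriv_sub_le (c := L * ‖w‖ ^ 2) (hF3 v w) fun t ht => by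
    have h := (abs_le.1 (hF1 (v + t • w) v w)).2
    rw [add_sub_cancel_left, norm_smul, norm_of_nonneg ht.1.le] at h
    rw [zero_smul, add_zero]
    linarith
  simp only [zero_smul, one_smul, add_zero] at key
  linarith

lemma potential_sub_le_of_apply_eq_zero {L : ℝ}
    (hF1 : ∀ u v w : X, |F u w - F v w| ≤ L * ‖u - v‖ * ‖w‖)
    (hF3 : ∀ v w : X, ∀ t : ℝ, HasDerivAt (fun s : ℝ => H (v + s • w)) (F (v + t • w) w) t)
    {x z : X} (hz : F z (x - z) = 0) : H x - H z ≤ L / 2 * ‖x - z‖ ^ 2 := by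
  simpa [hz] using potential_sub_le hF1 hF3 z (x - z)

lemma isMinOn_potential {ν : ℝ} (hν : 0 ≤ ν)
    (hF2 : ∀ u v : X, ν * ‖u - v‖ ^ 2 ≤ F u (u - v) - F v (u - v))
    (hF3 : ∀ v w : X, ∀ t : ℝ, HasDerivAt (fun s : ℝ => H (v + s • w)) (F (v + t • w) w) t)
    {Z : Submodule ℝ X} {z : X} (hz : z ∈ Z) (hcrit : ∀ w ∈ Z, F z w = 0) :
    IsMinOn H Z z := isMinOn_iff.2 fun x hx => by
  have h := potential_sub_ge hF2 hF3 z (x - z)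
  rw [hcrit _ (Z.sub_mem hx hz), add_sub_cancel] at h
  have : 0 ≤ ν / 2 * ‖x - z‖ ^ 2 := by positivity
  linarith

lemma norm_sub_le_of_linearization {ν β : ℝ} (hν : 0 < ν) (hβ : 0 ≤ β)
    (hF2 : ∀ u v : X, ν * ‖u - v‖ ^ 2 ≤ F u (u - v) - F v (u - v))
    (b : X →ₗ[ℝ] X →ₗ[ℝ] ℝ) (hb : ∀ v w, b v w ≤ β * ‖v‖ * ‖w‖)
    {Z : Submodule ℝ X} {x y z : X} (hx : x ∈ Z) (hz : z ∈ Z) (hcrit : ∀ w ∈ Z, F z w = 0)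
    (hlin : ∀ w ∈ Z, b y w = b x w - F x w) :
    ‖y - z‖ ≤ (1 + β / ν) * ‖y - x‖ := by
  have he : x - z ∈ Z := Z.sub_mem hx hz
  have hres : F x (x - z) - F z (x - z) = b (x - y) (x - z) := by
    rw [hcrit _ he, sub_zero, map_sub b, LinearMap.sub_apply, hlin _ he]; ring
  have hsq : ν * ‖x - z‖ * ‖x - z‖ ≤ β * ‖y - x‖ * ‖x - z‖ := by
    rw [mul_assoc, ← sq, norm_sub_rev y x]
    linarith [hF2 x z, hb (x - y) (x - z)]
  have hxz : ν * ‖x - z‖ ≤ β * ‖y - x‖ := by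
    rcases (norm_nonneg (x - z)).eq_or_lt with h0 | h0
    · rw [← h0, mul_zero]; positivity
    · exact le_of_mul_le_mul_right hsq h0
  calc ‖y - z‖ ≤ ‖y - x‖ + ‖x - z‖ := norm_sub_le_norm_sub_add_norm_sub y x z
    _ ≤ ‖y - x‖ + β / ν * ‖y - x‖ := by
        gcongr
        rw [div_mul_eq_mul_div, le_div_iff₀ hν]
        linarith
    _ = (1 + β / ν) * ‖y - x‖ := by ring

end Potential

section EnergyDecay

variable {E δ : ℕ → ℝ} {c K : ℝ}

lemma energy_le_geometric (hK : 0 < K) (hdec : ∀ n, c * δ n ^ 2 ≤ E n - E (n + 1))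
    (hrel : ∀ n, E (n + 1) ≤ K * (c * δ n ^ 2)) (n : ℕ) : E n ≤ (1 + K⁻¹)⁻¹ ^ n * E 0 := by
  induction n with
  | zero => simp
  | succ n ih =>
    have hstep : E (n + 1) ≤ (1 + K⁻¹)⁻¹ * E n := by
      have : E (n + 1) / K ≤ E n - E (n + 1) := by
        rw [div_le_iff₀ hK]
        linarith [hrel n, mul_le_mul_of_nonneg_left (hdec n) hK.le]
      rw [inv_mul_eq_div, le_div_iff₀ (by positivity), mul_add, mul_one, ← div_eq_mul_inv]
      linarith
    calc E (n + 1) ≤ (1 + K⁻¹)⁻¹ * E n := hstep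
      _ ≤ (1 + K⁻¹)⁻¹ * ((1 + K⁻¹)⁻¹ ^ n * E 0) := by gcongr
      _ = (1 + K⁻¹)⁻¹ ^ (n + 1) * E 0 := by ring

lemma le_pow_mul_sqrt_of_energy (hc : 0 < c) (hK : 0 < K) (hE : ∀ n, 0 ≤ E n)
    (hdec : ∀ n, c * δ n ^ 2 ≤ E n - E (n + 1)) (hrel : ∀ n, E (n + 1) ≤ K * (c * δ n ^ 2))
    (n : ℕ) : δ n ≤ (√(1 + K⁻¹))⁻¹ ^ n * √(E 0 / c) := by
  have h : δ n ^ 2 ≤ (1 + K⁻¹)⁻¹ ^ n * (E 0 / c) := by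
    rw [mul_div_assoc', le_div_iff₀ hc]
    linarith [hdec n, hE (n + 1), energy_le_geometric hK hdec hrel n]
  calc δ n ≤ √((1 + K⁻¹)⁻¹ ^ n * (E 0 / c)) := (le_abs_self _).trans (Real.abs_le_sqrt h)
    _ = (√(1 + K⁻¹))⁻¹ ^ n * √(E 0 / c) := by
        have hθ : 0 ≤ (√(1 + K⁻¹))⁻¹ := by positivity
        rw [Real.sqrt_mul (by positivity)]
        congr 1
        rw [← Real.sqrt_sq (pow_nonneg hθ n), ← pow_mul', pow_mul, inv_pow (√(1 + K⁻¹)) 2,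
          Real.sq_sqrt (by positivity)]

end EnergyDecay

theorem norm_iterate_succ_sub_le {X : Type*} [NormedAddCommGroup X] [NormedSpace ℝ X]
    {F : X → X →L[ℝ] ℝ} {H : X → ℝ} {L ν β CH : ℝ} (hL : 0 < L) (hν : 0 < ν) (hβ : 0 ≤ β)
    (hCH : 0 < CH)
    (hF1 : ∀ u v w : X, |F u w - F v w| ≤ L * ‖u - v‖ * ‖w‖)
    (hF2 : ∀ u v : X, ν * ‖u - v‖ ^ 2 ≤ F u (u - v) - F v (u - v))
    (hF3 : ∀ v w : X, ∀ t : ℝ, HasDerivAt (fun s : ℝ => H (v + s • w)) (F (v + t • w) w) t)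
    (a : X → X →ₗ[ℝ] X →ₗ[ℝ] ℝ) (hbdd : ∀ u v w : X, a u v w ≤ β * ‖v‖ * ‖w‖)
    {x : X} (hx : ∀ v, F x v = 0)
    {Z : Submodule ℝ X} {z : X} (hz : z ∈ Z) (hcrit : ∀ w ∈ Z, F z w = 0)
    {u : ℕ → X} (humem : ∀ n, u n ∈ Z)
    (hiter : ∀ n : ℕ, ∀ w ∈ Z, a (u n) (u (n + 1)) w = a (u n) (u n) w - F (u n) w)
    (hdec : ∀ n, CH * ‖u (n + 1) - u n‖ ^ 2 ≤ H (u n) - H (u (n + 1)))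
    {d : ℝ} (hd : ‖u 0 - x‖ ≤ d) (n : ℕ) :
    ‖u (n + 1) - u n‖ ≤
      (√(1 + (L * (1 + β / ν) ^ 2 / (2 * CH))⁻¹))⁻¹ ^ n * (√(L / (2 * CH)) * d) := by
  have hminZ := isMinOn_iff.1 (isMinOn_potential hν.le hF2 hF3 hz hcrit)
  have hmin := isMinOn_iff.1 (isMinOn_potential (Z := ⊤) hν.le hF2 hF3 trivial fun w _ => hx w)
  refine (le_pow_mul_sqrt_of_energy (E := fun n => H (u n) - H z)
    (δ := fun n => ‖u (n + 1) - u n‖) (K := L * (1 + β / ν) ^ 2 / (2 * CH)) hCH (by positivity)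
    (fun n => sub_nonneg.2 (hminZ _ (humem n))) (fun n => by linarith [hdec n]) (fun n => ?_)
    n).trans ?_
  · calc H (u (n + 1)) - H z ≤ L / 2 * ‖u (n + 1) - z‖ ^ 2 :=
          potential_sub_le_of_apply_eq_zero hF1 hF3 (hcrit _ (Z.sub_mem (humem _) hz))
      _ ≤ L / 2 * ((1 + β / ν) * ‖u (n + 1) - u n‖) ^ 2 := by
          gcongr
          exact norm_sub_le_of_linearization hν hβ hF2 (a (u n)) (hbdd (u n)) (humem n) hz hcrit
            (hiter n)
      _ = L * (1 + β / ν) ^ 2 / (2 * CH) * (CH * ‖u (n + 1) - u n‖ ^ 2) := by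
          field_simp
  · have hd₀ : 0 ≤ d := (norm_nonneg _).trans hd
    gcongr
    rw [Real.sqrt_le_left (by positivity), div_le_iff₀ hCH]
    calc H (u 0) - H z ≤ H (u 0) - H x := by linarith [hmin z trivial]
      _ ≤ L / 2 * ‖u 0 - x‖ ^ 2 := potential_sub_le_of_apply_eq_zero hF1 hF3 (hx _)
      _ ≤ L / 2 * d ^ 2 := by gcongr
      _ = (√(L / (2 * CH)) * d) ^ 2 * CH := by
          rw [mul_pow, Real.sq_sqrt (by positivity)]
          field_simp

section StoppingIndex

variable {K : ℝ}

lemma inv_sqrt_one_add_inv_bounds (hK : 0 < K) :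
    0 < (√(1 + K⁻¹))⁻¹ ∧ (√(1 + K⁻¹))⁻¹ < 1 ∧ (√(1 + K⁻¹))⁻¹ ≤ √K ∧
      (1 + K⁻¹) * (√(1 + K⁻¹))⁻¹ ^ 2 = 1 := by
  have hQ : 1 < 1 + K⁻¹ := by have := inv_pos.2 hK; linarith
  refine ⟨by positivity, inv_lt_one_of_one_lt₀ ?_, ?_, ?_⟩
  · rw [Real.lt_sqrt zero_le_one, one_pow]; exact hQ
  · rw [← Real.sqrt_inv]
    refine Real.sqrt_le_sqrt ?_
    rw [inv_le_iff_one_le_mul₀ (by positivity), mul_add, mul_inv_cancel₀ hK.ne']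
    linarith
  · rw [inv_pow, Real.sq_sqrt (by positivity), mul_inv_cancel₀ (by positivity)]

lemma estimator_le_of_not_stopped {η δ : ℕ → ℝ} {lam C₁ C b : ℝ} {m : ℕ} (hlam : 0 < lam)
    (hC₁ : 0 ≤ C₁) (hK : 0 < K) (hC : 0 ≤ C) (hb : 0 ≤ b)
    (hδ : ∀ n, δ n ≤ (√(1 + K⁻¹))⁻¹ ^ n * (C / √K * b))
    (hη : η (m + 2) ≤ η (m + 1) + C₁ * δ (m + 1)) (hfail : lam * η (m + 1) < δ m) :
    η (m + 2) ≤ (C * lam⁻¹ + C * C₁ * √K / (1 - (√(1 + K⁻¹))⁻¹)) * (1 + K⁻¹) *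
      (√(1 + K⁻¹))⁻¹ ^ (m + 1) * b := by
  obtain ⟨hθ, hθ1, hθs, hQθ⟩ := inv_sqrt_one_add_inv_bounds hK
  set θ := (√(1 + K⁻¹))⁻¹
  set Q := 1 + K⁻¹
  set s := √K
  have hs : 0 < s := hθ.trans_le hθs
  have h1θ : 0 < 1 - θ := by linarith
  have hQ : 0 ≤ Q := by positivity
  have hs₁ : s⁻¹ ≤ Q * θ := by
    rw [inv_le_iff_one_le_mul₀ hs]
    calc 1 = Q * θ * θ := by rw [← hQθ]; ring
      _ ≤ Q * θ * s := by gcongr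
  have hs₂ : s⁻¹ ≤ s * Q / (1 - θ) := by
    rw [le_div_iff₀ h1θ, inv_mul_le_iff₀ hs]
    calc 1 - θ ≤ Q * θ ^ 2 := by linarith
      _ ≤ s * (s * Q) := by rw [← mul_assoc, ← sq, mul_comm]; gcongr
  have hprev : lam⁻¹ * δ m ≤ C * lam⁻¹ * Q * θ ^ (m + 1) * b :=
    calc lam⁻¹ * δ m ≤ lam⁻¹ * (θ ^ m * (C / s * b)) := by gcongr; exact hδ m
      _ = C * lam⁻¹ * θ ^ m * b * s⁻¹ := by ring
      _ ≤ C * lam⁻¹ * θ ^ m * b * (Q * θ) := by gcongr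
      _ = C * lam⁻¹ * Q * θ ^ (m + 1) * b := by ring
  have hlast : C₁ * δ (m + 1) ≤ C * C₁ * s / (1 - θ) * Q * θ ^ (m + 1) * b :=
    calc C₁ * δ (m + 1) ≤ C₁ * (θ ^ (m + 1) * (C / s * b)) := by gcongr; exact hδ (m + 1)
      _ = C * C₁ * θ ^ (m + 1) * b * s⁻¹ := by ring
      _ ≤ C * C₁ * θ ^ (m + 1) * b * (s * Q / (1 - θ)) := by gcongr
      _ = C * C₁ * s / (1 - θ) * Q * θ ^ (m + 1) * b := by ring
  have hfail' : η (m + 1) < lam⁻¹ * δ m := (lt_inv_mul_iff₀ hlam).2 hfail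
  linarith

lemma nat_le_two_div_log_mul_log_add_one {k : ℕ} {x : ℝ} (hk : 1 ≤ k) (hK : 0 < K)
    (h : 1 ≤ x * (√(1 + K⁻¹))⁻¹ ^ (k - 1)) :
    (k : ℝ) ≤ 2 / Real.log (1 + K⁻¹) * Real.log x + 1 := by
  obtain ⟨hθ, -, -, -⟩ := inv_sqrt_one_add_inv_bounds hK
  have hlogQ : 0 < Real.log (1 + K⁻¹) := Real.log_pos (by have := inv_pos.2 hK; linarith)
  have hx : 0 < x := pos_of_mul_pos_left (one_pos.trans_le h) (by positivity)
  have hlog := Real.log_nonneg h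
  rw [Real.log_mul hx.ne' (by positivity), Real.log_pow, Real.log_inv,
    Real.log_sqrt (by positivity), Nat.cast_sub hk, Nat.cast_one] at hlog
  rw [div_mul_eq_mul_div, ← sub_le_iff_le_add, le_div_iff₀ hlogQ]
  linarith

lemma stopping_index_le {η δ : ℕ → ℝ} {k : ℕ} {lam C₁ C b : ℝ} (hk : 1 ≤ k) (hlam : 0 < lam)
    (hC₁ : 0 ≤ C₁) (hK : 0 < K) (hKC : K ≤ C * lam⁻¹) (hb : 0 ≤ b)
    (hδ : ∀ n, δ n ≤ (√(1 + K⁻¹))⁻¹ ^ n * (C / √K * b))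
    (hη : ∀ n, η (n + 1) ≤ η n + C₁ * δ n)
    (hmin : ∀ m, m + 2 ≤ k → lam * η (m + 1) < δ m) (hηk : 0 < η k) :
    (k : ℝ) ≤ 2 / Real.log (1 + K⁻¹) *
      Real.log ((C * lam⁻¹ + C * C₁ * √K / (1 - (√(1 + K⁻¹))⁻¹)) * (1 + K⁻¹) *
        max 1 (b / η k)) + 1 := by
  refine nat_le_two_div_log_mul_log_add_one hk hK ?_
  obtain ⟨hθ, hθ1, -, -⟩ := inv_sqrt_one_add_inv_bounds hK
  have hC : 0 ≤ C := (pos_of_mul_pos_left (hK.trans_le hKC) (by positivity)).le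
  have hC' : 0 ≤ C * C₁ * √K / (1 - (√(1 + K⁻¹))⁻¹) := by
    have := sub_pos.2 hθ1; positivity
  have hM : 1 ≤ max 1 (b / η k) := le_max_left _ _
  obtain rfl | ⟨m, rfl⟩ : k = 1 ∨ ∃ m, k = m + 2 := by
    rcases Nat.lt_or_ge k 2 with h | h
    · exact Or.inl (by omega)
    · exact Or.inr ⟨k - 2, by omega⟩
  · rw [Nat.sub_self, pow_zero, mul_one]
    calc (1 : ℝ) ≤ K * (1 + K⁻¹) := by rw [mul_add, mul_inv_cancel₀ hK.ne']; linarith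
      _ ≤ (C * lam⁻¹ + C * C₁ * √K / (1 - (√(1 + K⁻¹))⁻¹)) * (1 + K⁻¹) := by
          gcongr; linarith
      _ ≤ _ := le_mul_of_one_le_right (by positivity) hM
  · have hest := estimator_le_of_not_stopped hlam hC₁ hK hC hb hδ (hη (m + 1)) (hmin m le_rfl)
    set R := C * lam⁻¹ + C * C₁ * √K / (1 - (√(1 + K⁻¹))⁻¹)
    set M := max 1 (b / η (m + 2))
    have hbM : b ≤ M * η (m + 2) := by
      rw [← div_le_iff₀ hηk]; exact le_max_right _ _
    rw [show m + 2 - 1 = m + 1 by omega]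
    refine le_of_mul_le_mul_right ?_ hηk
    calc 1 * η (m + 2) ≤ R * (1 + K⁻¹) * (√(1 + K⁻¹))⁻¹ ^ (m + 1) * b := by rw [one_mul]; exact hest
      _ ≤ R * (1 + K⁻¹) * (√(1 + K⁻¹))⁻¹ ^ (m + 1) * (M * η (m + 2)) := by gcongr
      _ = R * (1 + K⁻¹) * M * (√(1 + K⁻¹))⁻¹ ^ (m + 1) * η (m + 2) := by ring

end StoppingIndex

lemma div_sqrt_eq_and_le_mul_inv {L CH lam C₃ C₄ C₆ C : ℝ} (hL : 0 < L) (hCH : 0 < CH)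
    (hlam : 0 < lam) (hC₃ : 0 < C₃) (hC₆ : lam * C₃ ≤ C₆) (hC₄ : C₄ = L * C₃ ^ 2 / (2 * CH))
    (hC : C = √L * √C₄ * C₆ / (√2 * √CH)) :
    C / √C₄ = √(L / (2 * CH)) * C₆ ∧ C₄ ≤ C * lam⁻¹ := by
  have hC₄pos : 0 < C₄ := by rw [hC₄]; positivity
  have hsqrtC₄ : √C₄ = √(L / (2 * CH)) * C₃ := by
    rw [hC₄, mul_div_right_comm, Real.sqrt_mul' _ (sq_nonneg C₃), Real.sqrt_sq hC₃.le]
  have hCρ : C / √C₄ = √(L / (2 * CH)) * C₆ := by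
    rw [hC, Real.sqrt_div' L (by positivity), Real.sqrt_mul zero_le_two]
    field_simp
  refine ⟨hCρ, ?_⟩
  rw [le_mul_inv_iff₀ hlam]
  calc C₄ * lam = √C₄ * √C₄ * lam := by rw [Real.mul_self_sqrt hC₄pos.le]
    _ = √C₄ * √(L / (2 * CH)) * (lam * C₃) := by rw [hsqrtC₄]; ring
    _ ≤ √C₄ * √(L / (2 * CH)) * C₆ := by gcongr
    _ = C := by rw [mul_assoc, ← hCρ]; field_simp

theorem stmt_19_general
    {X : Type*} [NormedAddCommGroup X] [InnerProductSpace ℝ X]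
    (F : X → X →L[ℝ] ℝ) (L ν : ℝ) (hL : 0 < L) (hν : 0 < ν)
    (hF1 : ∀ u v w : X, |F u w - F v w| ≤ L * ‖u - v‖ * ‖w‖)
    (hF2 : ∀ u v : X, ν * ‖u - v‖ ^ 2 ≤ F u (u - v) - F v (u - v))
    (ustar : X) (hustar : ∀ v : X, F ustar v = 0)
    (a : X → X →ₗ[ℝ] X →ₗ[ℝ] ℝ) (β : ℝ) (hβ : 0 < β)
    (hbdd : ∀ u v w : X, a u v w ≤ β * ‖v‖ * ‖w‖)
    (H : X → ℝ)
    (hF3 : ∀ v w : X, ∀ t : ℝ, HasDerivAt (fun s : ℝ => H (v + s • w)) (F (v + t • w) w) t)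
    -- nested closed subspaces `Y = X_{N−1} ⊆ Z = X_N`
    (Z : Submodule ℝ X)
    -- discrete solutions and estimators satisfying (A1)–(A2) on `Y` and `Z`
    (ustarZ : X) (hustarZ_mem : ustarZ ∈ Z) (hustarZ : ∀ v ∈ Z, F ustarZ v = 0)
    (ηY ηZ : X → ℝ) (C₁ C₂ : ℝ) (hC₁ : 1 ≤ C₁) (hC₂ : 1 ≤ C₂)
    (hA1Z : ∀ v ∈ Z, ∀ w ∈ Z, |ηZ v - ηZ w| ≤ C₁ * ‖v - w‖)
    -- the constants
    (lam : ℝ) (hlam : 0 < lam)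
    (C₃ C₅ C₆ : ℝ) (hC₃ : C₃ = 1 + β / ν) (hC₅ : C₅ = C₃ * C₁)
    (hC₆ : C₆ = lam * C₃ + C₂ * (1 + lam * C₅))
    (CH : ℝ) (hCH : 0 < CH)
    (C₄ C C' : ℝ) (hC₄ : C₄ = L * C₃ ^ 2 / (2 * CH))
    (hC : C = Real.sqrt L * Real.sqrt C₄ * C₆ / (Real.sqrt 2 * Real.sqrt CH))
    (hC' : C' = C * C₁ * Real.sqrt C₄ / (1 - (Real.sqrt (1 + C₄⁻¹))⁻¹))
    -- the previous approximation `u_{N−1}` and the iterates on `Z = X_N`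
    (uprev : X)
    (huprev : ‖ustar - uprev‖ ≤ C₆ * ηY uprev) (hηYpos : 0 < ηY uprev)
    (u : ℕ → X) (hu0 : u 0 = uprev) (humem : ∀ n : ℕ, u n ∈ Z)
    (hiter : ∀ n : ℕ, ∀ w ∈ Z, a (u n) (u (n + 1)) w = a (u n) (u n) w - F (u n) w)
    (hF4 : ∀ n : ℕ, 1 ≤ n → CH * ‖u n - u (n - 1)‖ ^ 2 ≤ H (u (n - 1)) - H (u n))
    -- `k` is the minimal stopping index
    (k : ℕ) (hk : 1 ≤ k)
    (hkmin : ∀ m : ℕ, 1 ≤ m → m < k → ¬ ‖u m - u (m - 1)‖ ≤ lam * ηZ (u m))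
    (hηZpos : 0 < ηZ (u k)) :
    (k : ℝ) ≤ 2 / Real.log (1 + C₄⁻¹) *
        Real.log ((C * lam⁻¹ + C') * (1 + C₄⁻¹) * max 1 (ηY uprev / ηZ (u k))) + 1 := by
  subst hC'
  have hC₃pos : 0 < C₃ := by rw [hC₃]; positivity
  have hlamC₆ : lam * C₃ ≤ C₆ := by
    have : 0 ≤ C₂ * (1 + lam * C₅) := by rw [hC₅]; have := hC₁; positivity
    linarith
  have hC₄pos : 0 < C₄ := by rw [hC₄]; positivity
  obtain ⟨hCρ, hKC⟩ := div_sqrt_eq_and_le_mul_inv hL hCH hlam hC₃pos hlamC₆ hC₄ hC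
  have hδ : ∀ n, ‖u (n + 1) - u n‖ ≤ (√(1 + C₄⁻¹))⁻¹ ^ n * (C / √C₄ * ηY uprev) := by
    intro n
    have h := norm_iterate_succ_sub_le hL hν hβ.le hCH hF1 hF2 hF3 a hbdd hustar hustarZ_mem
      hustarZ humem hiter (fun n => by simpa using hF4 (n + 1) (by omega))
      (d := C₆ * ηY uprev) (by rwa [hu0, norm_sub_rev]) n
    rw [← hC₃, ← hC₄] at h
    rwa [hCρ, mul_assoc]
  refine stopping_index_le (η := fun n => ηZ (u n)) (δ := fun n => ‖u (n + 1) - u n‖) hk hlam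
    (by linarith) hC₄pos hKC hηYpos.le hδ (fun n => ?_) (fun m hm => ?_) hηZpos
  · linarith [(abs_le.1 (hA1Z _ (humem (n + 1)) _ (humem n))).2]
  · simpa using not_le.1 (hkmin (m + 1) (by omega) (by omega))

/-- Bound on the number of linearization steps on the space `X_N` (here `Z`, with
previous space `X_{N−1}` here `Y`): if `k ≥ 1` is the minimal index with
`‖u_N^k − u_N^{k−1}‖ ≤ λ η_N(u_N^k)` and `η_N(u_N^k) > 0`, then
`k ≤ (2/log(1+C₄⁻¹)) log((Cλ⁻¹+C')(1+C₄⁻¹) max{1, η_{N−1}(u_{N−1})/η_N(u_N^k)}) + 1`. -/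
theorem stmt_19
    {X : Type*} [NormedAddCommGroup X] [InnerProductSpace ℝ X] [CompleteSpace X]
    (F : X → X →L[ℝ] ℝ) (L ν : ℝ) (hL : 0 < L) (hν : 0 < ν)
    (hF1 : ∀ u v w : X, |F u w - F v w| ≤ L * ‖u - v‖ * ‖w‖)
    (hF2 : ∀ u v : X, ν * ‖u - v‖ ^ 2 ≤ F u (u - v) - F v (u - v))
    (ustar : X) (hustar : ∀ v : X, F ustar v = 0)
    (a : X → X →ₗ[ℝ] X →ₗ[ℝ] ℝ) (α β : ℝ) (hα : 0 < α) (hβ : 0 < β)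
    (hcoer : ∀ u v : X, α * ‖v‖ ^ 2 ≤ a u v v)
    (hbdd : ∀ u v w : X, a u v w ≤ β * ‖v‖ * ‖w‖)
    (H : X → ℝ)
    (hF3 : ∀ v w : X, ∀ t : ℝ, HasDerivAt (fun s : ℝ => H (v + s • w)) (F (v + t • w) w) t)
    -- nested closed subspaces `Y = X_{N−1} ⊆ Z = X_N`
    (Y Z : Submodule ℝ X) (hYZ : Y ≤ Z)
    (hYclosed : IsClosed (Y : Set X)) (hZclosed : IsClosed (Z : Set X))
    -- discrete solutions and estimators satisfying (A1)–(A2) on `Y` and `Z`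
    (ustarY : X) (hustarY_mem : ustarY ∈ Y) (hustarY : ∀ v ∈ Y, F ustarY v = 0)
    (ustarZ : X) (hustarZ_mem : ustarZ ∈ Z) (hustarZ : ∀ v ∈ Z, F ustarZ v = 0)
    (ηY ηZ : X → ℝ) (C₁ C₂ : ℝ) (hC₁ : 1 ≤ C₁) (hC₂ : 1 ≤ C₂)
    (hηYnonneg : ∀ v ∈ Y, 0 ≤ ηY v) (hηZnonneg : ∀ v ∈ Z, 0 ≤ ηZ v)
    (hA1Y : ∀ v ∈ Y, ∀ w ∈ Y, |ηY v - ηY w| ≤ C₁ * ‖v - w‖)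
    (hA1Z : ∀ v ∈ Z, ∀ w ∈ Z, |ηZ v - ηZ w| ≤ C₁ * ‖v - w‖)
    (hA2Y : ‖ustar - ustarY‖ ≤ C₂ * ηY ustarY)
    (hA2Z : ‖ustar - ustarZ‖ ≤ C₂ * ηZ ustarZ)
    -- the constants
    (lam : ℝ) (hlam : 0 < lam)
    (C₃ C₅ C₆ : ℝ) (hC₃ : C₃ = 1 + β / ν) (hC₅ : C₅ = C₃ * C₁)
    (hlam' : lam < 1 / C₅)
    (hC₆ : C₆ = lam * C₃ + C₂ * (1 + lam * C₅))
    (CH : ℝ) (hCH : 0 < CH)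
    (C₄ C C' : ℝ) (hC₄ : C₄ = L * C₃ ^ 2 / (2 * CH))
    (hC : C = Real.sqrt L * Real.sqrt C₄ * C₆ / (Real.sqrt 2 * Real.sqrt CH))
    (hC' : C' = C * C₁ * Real.sqrt C₄ / (1 - (Real.sqrt (1 + C₄⁻¹))⁻¹))
    -- the previous approximation `u_{N−1}` and the iterates on `Z = X_N`
    (uprev : X) (huprev_mem : uprev ∈ Y)
    (huprev : ‖ustar - uprev‖ ≤ C₆ * ηY uprev) (hηYpos : 0 < ηY uprev)
    (u : ℕ → X) (hu0 : u 0 = uprev) (humem : ∀ n : ℕ, u n ∈ Z)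
    (hiter : ∀ n : ℕ, ∀ w ∈ Z, a (u n) (u (n + 1)) w = a (u n) (u n) w - F (u n) w)
    (hF4 : ∀ n : ℕ, 1 ≤ n → CH * ‖u n - u (n - 1)‖ ^ 2 ≤ H (u (n - 1)) - H (u n))
    -- `k` is the minimal stopping index
    (k : ℕ) (hk : 1 ≤ k)
    (hkstop : ‖u k - u (k - 1)‖ ≤ lam * ηZ (u k))
    (hkmin : ∀ m : ℕ, 1 ≤ m → m < k → ¬ ‖u m - u (m - 1)‖ ≤ lam * ηZ (u m))
    (hηZpos : 0 < ηZ (u k)) :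
    (k : ℝ) ≤ 2 / Real.log (1 + C₄⁻¹) *
        Real.log ((C * lam⁻¹ + C') * (1 + C₄⁻¹) * max 1 (ηY uprev / ηZ (u k))) + 1 :=
  stmt_19_general F L ν hL hν hF1 hF2 ustar hustar a β hβ hbdd H hF3 Z ustarZ hustarZ_mem hustarZ ηY
    ηZ C₁ C₂ hC₁ hC₂ hA1Z lam hlam C₃ C₅ C₆ hC₃ hC₅ hC₆ CH hCH C₄ C C' hC₄ hC hC' uprev huprev
    hηYpos u hu0 humem hiter hF4 k hk hkmin hηZpos
end
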